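/- arXiv:2511.18895 — 5 statements merged into one kernel-verified Lean document; each statement's English description precedes it below -/
import Mathlib

section
/- Let n, k ≥ 1 and let φ : ℝ^k → ℝ^{2n+1} be Lipschitz from ℝ^k with the Euclidean distance to ℝ^{2n+1} with the Cygan–Korányi distance d. Then for Lebesgue-almost every x ∈ ℝ^k, φ is differentiable at x and the derivative is horizontal: θ_{φ(x)}(Dφ(x)v) = 0 for every v ∈ ℝ^k. -/
open MeasureTheory

noncomputable section

/-- The Heisenberg group `ℍⁿ` as `ℝⁿ × ℝⁿ × ℝ`, points written `p = (x, y, t)`. -/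
abbrev Heis (n : ℕ) : Type := (Fin n → ℝ) × (Fin n → ℝ) × ℝ

/-- The Heisenberg group law. -/
def hmul {n : ℕ} (p q : Heis n) : Heis n :=
  (p.1 + q.1, p.2.1 + q.2.1,
    p.2.2 + q.2.2 + (1 / 2) * ∑ j, (p.1 j * q.2.1 j - p.2.1 j * q.1 j))

/-- The Heisenberg group inverse. -/
def hinv {n : ℕ} (p : Heis n) : Heis n := (-p.1, -p.2.1, -p.2.2)

/-- The Cygan–Korányi gauge `ρ(x,y,t) = (|(x,y)|⁴ + 16 t²)^(1/4)`. -/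
def hgauge {n : ℕ} (p : Heis n) : ℝ :=
  ((∑ j, p.1 j ^ 2 + ∑ j, p.2.1 j ^ 2) ^ 2 + 16 * p.2.2 ^ 2) ^ ((1 : ℝ) / 4)

/-- The Cygan–Korányi distance `d(p,q) = ρ(p⁻¹·q)`. -/
def hdist {n : ℕ} (p q : Heis n) : ℝ := hgauge (hmul (hinv p) q)

/-- The contact form `θ` at the point `p`, evaluated on the tangent vector `v`:
`θ_p(v) = v_t − (1/2)∑ (x_j v_{y_j} − y_j v_{x_j})`. -/
def theta {n : ℕ} (p v : Heis n) : ℝ :=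
  v.2.2 - (1 / 2) * ∑ j, (p.1 j * v.2.1 j - p.2.1 j * v.1 j)

namespace HeisAux

variable {n : ℕ}

lemma hgauge_nonneg (p : Heis n) : 0 ≤ hgauge p :=
  Real.rpow_nonneg (by positivity) _

lemma hgauge_pow4 (p : Heis n) :
    hgauge p ^ 4 = (∑ j, p.1 j ^ 2 + ∑ j, p.2.1 j ^ 2) ^ 2 + 16 * p.2.2 ^ 2 := by
  have hX : (0:ℝ) ≤ (∑ j, p.1 j ^ 2 + ∑ j, p.2.1 j ^ 2) ^ 2 + 16 * p.2.2 ^ 2 := by positivity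
  rw [hgauge, ← Real.rpow_natCast (_ ^ ((1:ℝ)/4)) 4, ← Real.rpow_mul hX]
  norm_num

lemma abs_fst_le (p : Heis n) (j : Fin n) : |p.1 j| ≤ hgauge p := by
  have h1 : p.1 j ^ 2 ≤ ∑ i, p.1 i ^ 2 + ∑ i, p.2.1 i ^ 2 := by
    have h3 : p.1 j ^ 2 ≤ ∑ i, p.1 i ^ 2 := by
      simpa using Finset.single_le_sum (f := fun i => p.1 i ^ 2)
        (fun i _ => sq_nonneg _) (Finset.mem_univ j)
    have h2 : (0:ℝ) ≤ ∑ i, p.2.1 i ^ 2 := by positivity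
    linarith
  have h4 : |p.1 j| ^ 4 ≤ hgauge p ^ 4 := by
    rw [hgauge_pow4]
    have : |p.1 j| ^ 4 = (p.1 j ^ 2) ^ 2 := by
      rw [show |p.1 j| ^ 4 = (|p.1 j| ^ 2) ^ 2 by ring, sq_abs]
    rw [this]
    have hnn : (0:ℝ) ≤ p.1 j ^ 2 := sq_nonneg _
    nlinarith [sq_nonneg (p.2.2)]
  exact le_of_pow_le_pow_left₀ (by norm_num) (hgauge_nonneg p) h4

lemma abs_snd_le (p : Heis n) (j : Fin n) : |p.2.1 j| ≤ hgauge p := by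
  have h1 : p.2.1 j ^ 2 ≤ ∑ i, p.1 i ^ 2 + ∑ i, p.2.1 i ^ 2 := by
    have h3 : p.2.1 j ^ 2 ≤ ∑ i, p.2.1 i ^ 2 := by
      simpa using Finset.single_le_sum (f := fun i => p.2.1 i ^ 2)
        (fun i _ => sq_nonneg _) (Finset.mem_univ j)
    have h2 : (0:ℝ) ≤ ∑ i, p.1 i ^ 2 := by positivity
    linarith
  have h4 : |p.2.1 j| ^ 4 ≤ hgauge p ^ 4 := by
    rw [hgauge_pow4]
    have : |p.2.1 j| ^ 4 = (p.2.1 j ^ 2) ^ 2 := by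
      rw [show |p.2.1 j| ^ 4 = (|p.2.1 j| ^ 2) ^ 2 by ring, sq_abs]
    rw [this]
    nlinarith [sq_nonneg (p.2.2)]
  exact le_of_pow_le_pow_left₀ (by norm_num) (hgauge_nonneg p) h4

lemma abs_third_le (p : Heis n) : 4 * |p.2.2| ≤ hgauge p ^ 2 := by
  have h4 : (4 * |p.2.2|) ^ 2 ≤ (hgauge p ^ 2) ^ 2 := by
    have : (hgauge p ^ 2) ^ 2 = hgauge p ^ 4 := by ring
    rw [this, hgauge_pow4]
    have : (4 * |p.2.2|) ^ 2 = 16 * p.2.2 ^ 2 := by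
      rw [mul_pow, ← sq_abs (p.2.2)]; norm_num
    rw [this]
    nlinarith [sq_nonneg (∑ j, p.1 j ^ 2 + ∑ j, p.2.1 j ^ 2)]
  exact le_of_pow_le_pow_left₀ (by norm_num) (sq_nonneg _) h4

end HeisAux

/-- If `φ : ℝ^k → ℍⁿ` is Lipschitz from the Euclidean distance to the Cygan–Korányi
distance, then for a.e. `x`, `φ` is differentiable at `x` and the derivative is horizontal:
`θ_{φ(x)}(Dφ(x)v) = 0` for all `v`. -/
theorem stmt3 (n k : ℕ) (hn : 1 ≤ n) (hk : 1 ≤ k) (C : ℝ)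
    (φ : EuclideanSpace ℝ (Fin k) → Heis n)
    (hφ : ∀ x y : EuclideanSpace ℝ (Fin k), hdist (φ x) (φ y) ≤ C * dist x y) :
    ∀ᵐ x ∂(volume : Measure (EuclideanSpace ℝ (Fin k))),
      ∃ D : EuclideanSpace ℝ (Fin k) →L[ℝ] Heis n,
        HasFDerivAt φ D x ∧ ∀ v, theta (φ x) (D v) = 0 := by
  classical
  set C' : ℝ := |C| with hC'
  have hC'0 : 0 ≤ C' := abs_nonneg C
  -- the gauge Lipschitz bound with nonnegative constant
  have hφ' : ∀ x y, hdist (φ x) (φ y) ≤ C' * dist x y := fun x y =>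
    (hφ x y).trans (by
      have := dist_nonneg (x := x) (y := y)
      exact mul_le_mul_of_nonneg_right (le_abs_self C) this)
  -- the first components of the difference p⁻¹q
  have hcomp1 : ∀ x y j, (φ y).1 j - (φ x).1 j = (hmul (hinv (φ x)) (φ y)).1 j := by
    intro x y j; simp [hmul, hinv]; ring
  have hcomp2 : ∀ x y j, (φ y).2.1 j - (φ x).2.1 j = (hmul (hinv (φ x)) (φ y)).2.1 j := by
    intro x y j; simp [hmul, hinv]; ring
  have hcomp3 : ∀ x y, (hmul (hinv (φ x)) (φ y)).2.2 =
      (φ y).2.2 - (φ x).2.2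
        - (1/2) * ∑ j, ((φ x).1 j * (φ y).2.1 j - (φ x).2.1 j * (φ y).1 j) := by
    intro x y
    simp only [hmul, hinv]
    have hsum : ∀ j : Fin n, (-(φ x).1) j * (φ y).2.1 j - (-(φ x).2.1) j * (φ y).1 j
        = -((φ x).1 j * (φ y).2.1 j - (φ x).2.1 j * (φ y).1 j) := by
      intro j; simp only [Pi.neg_apply]; ring
    rw [Finset.sum_congr rfl (fun j _ => hsum j), Finset.sum_neg_distrib]
    ring
  -- Lipschitz bounds for the horizontal components
  have hlip1 : ∀ (j : Fin n), LipschitzWith C'.toNNReal (fun x => (φ x).1 j) := by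
    intro j
    apply LipschitzWith.of_dist_le_mul
    intro x y
    have h1 := HeisAux.abs_fst_le (hmul (hinv (φ x)) (φ y)) j
    rw [← hcomp1 x y j] at h1
    calc dist ((φ x).1 j) ((φ y).1 j) = |(φ y).1 j - (φ x).1 j| := by
          rw [Real.dist_eq, abs_sub_comm]
      _ ≤ hdist (φ x) (φ y) := h1
      _ ≤ C' * dist x y := hφ' x y
      _ = (C'.toNNReal : ℝ) * dist x y := by
          rw [Real.coe_toNNReal _ hC'0]
  have hlip2 : ∀ (j : Fin n), LipschitzWith C'.toNNReal (fun x => (φ x).2.1 j) := by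
    intro j
    apply LipschitzWith.of_dist_le_mul
    intro x y
    have h1 := HeisAux.abs_snd_le (hmul (hinv (φ x)) (φ y)) j
    rw [← hcomp2 x y j] at h1
    calc dist ((φ x).2.1 j) ((φ y).2.1 j) = |(φ y).2.1 j - (φ x).2.1 j| := by
          rw [Real.dist_eq, abs_sub_comm]
      _ ≤ hdist (φ x) (φ y) := h1
      _ ≤ C' * dist x y := hφ' x y
      _ = (C'.toNNReal : ℝ) * dist x y := by
          rw [Real.coe_toNNReal _ hC'0]
  -- the quadratic bound on the adjusted vertical increment
  have hquad : ∀ x y,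
      |(φ y).2.2 - (φ x).2.2
        - (1/2) * ∑ j, ((φ x).1 j * (φ y).2.1 j - (φ x).2.1 j * (φ y).1 j)|
        ≤ (C' ^ 2 / 4) * dist x y ^ 2 := by
    intro x y
    have h1 := HeisAux.abs_third_le (hmul (hinv (φ x)) (φ y))
    rw [hcomp3 x y] at h1
    have h2 : hgauge (hmul (hinv (φ x)) (φ y)) ^ 2 ≤ (C' * dist x y) ^ 2 := by
      apply pow_le_pow_left₀ (HeisAux.hgauge_nonneg _) (hφ' x y)
    nlinarith [dist_nonneg (x := x) (y := y)]
  -- a.e. differentiability of the horizontal components (Rademacher)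
  have hae : ∀ᵐ x ∂(volume : Measure (EuclideanSpace ℝ (Fin k))),
      (∀ j : Fin n, DifferentiableAt ℝ (fun y => (φ y).1 j) x) ∧
      (∀ j : Fin n, DifferentiableAt ℝ (fun y => (φ y).2.1 j) x) := by
    rw [Filter.eventually_and]
    constructor <;> rw [ae_all_iff] <;> intro j
    · exact (hlip1 j).ae_differentiableAt
    · exact (hlip2 j).ae_differentiableAt
  filter_upwards [hae] with x hx
  obtain ⟨hx1, hx2⟩ := hx
  set F : Fin n → EuclideanSpace ℝ (Fin k) →L[ℝ] ℝ :=
    fun j => fderiv ℝ (fun y => (φ y).1 j) x with hF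
  set G : Fin n → EuclideanSpace ℝ (Fin k) →L[ℝ] ℝ :=
    fun j => fderiv ℝ (fun y => (φ y).2.1 j) x with hG
  set S : EuclideanSpace ℝ (Fin k) →L[ℝ] ℝ :=
    ∑ j, ((φ x).1 j • G j - (φ x).2.1 j • F j) with hS
  set L : EuclideanSpace ℝ (Fin k) →L[ℝ] ℝ := (1/2 : ℝ) • S with hL
  refine ⟨(ContinuousLinearMap.pi F).prod ((ContinuousLinearMap.pi G).prod L), ?_, ?_⟩
  · -- differentiability
    have hdf : HasFDerivAt (fun y => (φ y).1) (ContinuousLinearMap.pi F) x :=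
      hasFDerivAt_pi.2 fun j => (hx1 j).hasFDerivAt
    have hdg : HasFDerivAt (fun y => (φ y).2.1) (ContinuousLinearMap.pi G) x :=
      hasFDerivAt_pi.2 fun j => (hx2 j).hasFDerivAt
    -- the vertical component
    have hw : HasFDerivAt
        (fun y => (1/2 : ℝ) * ∑ j, ((φ x).1 j * (φ y).2.1 j - (φ x).2.1 j * (φ y).1 j))
        L x := by
      have hsum : HasFDerivAt
          (fun y => ∑ j, ((φ x).1 j * (φ y).2.1 j - (φ x).2.1 j * (φ y).1 j)) S x := by
        rw [hS]
        apply HasFDerivAt.fun_sum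
        intro j _
        exact (((hx2 j).hasFDerivAt.const_mul ((φ x).1 j)).sub
          ((hx1 j).hasFDerivAt.const_mul ((φ x).2.1 j)))
      simpa [hL] using hsum.const_mul (1/2 : ℝ)
    have hu : HasFDerivAt
        (fun y => (φ y).2.2
          - (1/2 : ℝ) * ∑ j, ((φ x).1 j * (φ y).2.1 j - (φ x).2.1 j * (φ y).1 j))
        (0 : EuclideanSpace ℝ (Fin k) →L[ℝ] ℝ) x := by
      rw [hasFDerivAt_iff_isLittleO]
      have hbig : (fun y => ((φ y).2.2
            - (1/2 : ℝ) * ∑ j, ((φ x).1 j * (φ y).2.1 j - (φ x).2.1 j * (φ y).1 j))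
            - ((φ x).2.2
            - (1/2 : ℝ) * ∑ j, ((φ x).1 j * (φ x).2.1 j - (φ x).2.1 j * (φ x).1 j))
            - (0 : EuclideanSpace ℝ (Fin k) →L[ℝ] ℝ) (y - x))
          =O[nhds x] (fun y => ‖y - x‖ * ‖y - x‖) := by
        apply Asymptotics.IsBigO.of_bound (C' ^ 2 / 4)
        filter_upwards with y
        have hzero : ∑ j, ((φ x).1 j * (φ x).2.1 j - (φ x).2.1 j * (φ x).1 j) = 0 :=
          Finset.sum_eq_zero fun j _ => by ring
        have hq := hquad x y
        have hd : dist x y = ‖y - x‖ := by rw [dist_eq_norm, norm_sub_rev]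
        rw [hd] at hq
        simp only [ContinuousLinearMap.zero_apply, sub_zero, hzero, mul_zero]
        calc ‖(φ y).2.2 - (1/2 : ℝ) * ∑ j, ((φ x).1 j * (φ y).2.1 j - (φ x).2.1 j * (φ y).1 j)
              - (φ x).2.2‖
            = |(φ y).2.2 - (φ x).2.2
              - (1/2 : ℝ) * ∑ j, ((φ x).1 j * (φ y).2.1 j - (φ x).2.1 j * (φ y).1 j)| := by
              rw [Real.norm_eq_abs]; ring_nf
          _ ≤ (C' ^ 2 / 4) * ‖y - x‖ ^ 2 := hq
          _ = C' ^ 2 / 4 * ‖‖y - x‖ * ‖y - x‖‖ := by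
              rw [Real.norm_eq_abs, abs_of_nonneg (by positivity)]; ring
      have hlit : (fun y : EuclideanSpace ℝ (Fin k) => ‖y - x‖ * ‖y - x‖)
          =o[nhds x] (fun y => y - x) := by
        rw [← Asymptotics.isLittleO_norm_right]
        have h0 : Filter.Tendsto (fun y : EuclideanSpace ℝ (Fin k) => ‖y - x‖)
            (nhds x) (nhds 0) := by
          have : Filter.Tendsto (fun y : EuclideanSpace ℝ (Fin k) => y - x)
              (nhds x) (nhds (x - x)) := Filter.Tendsto.sub_const Filter.tendsto_id x
          rw [sub_self] at this
          simpa using this.norm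
        have h2 : (fun y : EuclideanSpace ℝ (Fin k) => ‖y - x‖)
            =o[nhds x] (fun _ => (1:ℝ)) := Asymptotics.isLittleO_one_iff ℝ |>.2 h0
        have := (Asymptotics.isBigO_refl (fun y : EuclideanSpace ℝ (Fin k) => ‖y - x‖)
          (nhds x)).mul_isLittleO h2
        simpa using this
      exact hbig.trans_isLittleO hlit
    have hdh : HasFDerivAt (fun y => (φ y).2.2) L x := by
      have := hu.fun_add hw
      have heq : (fun y => ((φ y).2.2
          - (1/2 : ℝ) * ∑ j, ((φ x).1 j * (φ y).2.1 j - (φ x).2.1 j * (φ y).1 j))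
          + (1/2 : ℝ) * ∑ j, ((φ x).1 j * (φ y).2.1 j - (φ x).2.1 j * (φ y).1 j))
          = (fun y => (φ y).2.2) := by
        funext y; ring
      rw [heq, zero_add] at this
      exact this
    exact HasFDerivAt.prodMk hdf (HasFDerivAt.prodMk hdg hdh)
  · -- horizontality
    intro v
    simp only [theta, ContinuousLinearMap.prod_apply, ContinuousLinearMap.pi_apply, hL, hS,
      ContinuousLinearMap.smul_apply, ContinuousLinearMap.sum_apply,
      ContinuousLinearMap.sub_apply, smul_eq_mul]
    rw [Finset.mul_sum]
    rw [← Finset.sum_sub_distrib]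
    apply Finset.sum_eq_zero
    intro j _
    ring
end
end

section
/- Let n ≥ 1 and let k be an integer with n < k. Then the Lefschetz operator L : ⋀^{k−2}(ℝ^{2n}) → ⋀^k(ℝ^{2n}), L(η) = ω ∧ η, is surjective; equivalently, every element of ⋀^k(ℝ^{2n}) with k > n is divisible by the symplectic 2-vector ω. -/
noncomputable section

/-- The `k`-th graded piece `⋀^k(ℝ^{2n})` of the exterior algebra of `ℝ^{2n}`,
as a submodule of the exterior algebra. -/
def extGrade (n k : ℕ) : Submodule ℝ (ExteriorAlgebra ℝ (Fin (2 * n) → ℝ)) :=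
  (LinearMap.range
      (ExteriorAlgebra.ι ℝ :
        (Fin (2 * n) → ℝ) →ₗ[ℝ] ExteriorAlgebra ℝ (Fin (2 * n) → ℝ))) ^ k

/-- The symplectic 2-vector `ω = ∑_{j=1}^n e_j ∧ e_{n+j}` in the exterior algebra
of `ℝ^{2n}`. -/
def sympVec (n : ℕ) : ExteriorAlgebra ℝ (Fin (2 * n) → ℝ) :=
  ∑ j : Fin n,
    ExteriorAlgebra.ι ℝ (Pi.single (⟨j.1, by have := j.2; omega⟩ : Fin (2 * n)) 1) *
      ExteriorAlgebra.ι ℝ (Pi.single (⟨n + j.1, by have := j.2; omega⟩ : Fin (2 * n)) 1)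

open ExteriorAlgebra

namespace SympAux


variable (n : ℕ)

abbrev E := ExteriorAlgebra ℝ (Fin (2 * n) → ℝ)
abbrev V : Submodule ℝ (E n) := LinearMap.range (ι ℝ : (Fin (2*n) → ℝ) →ₗ[ℝ] E n)

/-- first index of pair j -/
def fj (j : Fin n) : Fin (2 * n) := ⟨j.1, by have := j.2; omega⟩
/-- second index of pair j -/
def sj (j : Fin n) : Fin (2 * n) := ⟨n + j.1, by have := j.2; omega⟩

def av (i : Fin (2 * n)) : E n := ι ℝ (Pi.single i 1)

def ω : E n := ∑ j : Fin n, av n (fj n j) * av n (sj n j)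

/-- contraction operator -/
def dC (q : Fin (2 * n)) : E n →ₗ[ℝ] E n :=
  CliffordAlgebra.contractLeft (LinearMap.proj q)

def Lam : E n →ₗ[ℝ] E n := ∑ j : Fin n, (dC n (fj n j)).comp (dC n (sj n j))

def Nop : E n →ₗ[ℝ] E n :=
  ∑ q : Fin (2 * n), (LinearMap.mulLeft ℝ (av n q)).comp (dC n q)

variable {n}

lemma dC_ι_mul (q : Fin (2 * n)) (v : Fin (2 * n) → ℝ) (x : E n) :
    dC n q (ι ℝ v * x) = v q • x - ι ℝ v * dC n q x :=
  CliffordAlgebra.contractLeft_ι_mul _ _ _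

lemma dC_av_mul (q i : Fin (2 * n)) (x : E n) :
    dC n q (av n i * x) = (if q = i then (1:ℝ) else 0) • x - av n i * dC n q x := by
  rw [av, dC_ι_mul, Pi.single_apply]

lemma dC_algebraMap (q : Fin (2 * n)) (r : ℝ) :
    dC n q (algebraMap ℝ (E n) r) = 0 :=
  CliffordAlgebra.contractLeft_algebraMap _ _ _

lemma ι_swap (v w : Fin (2 * n) → ℝ) : ι ℝ w * ι ℝ v = -(ι ℝ v * ι ℝ w) := by
  exact eq_neg_of_add_eq_zero_left (ExteriorAlgebra.ι_add_mul_swap w v)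


lemma sum_smul_single (v : Fin (2 * n) → ℝ) :
    ∑ q, v q • (Pi.single q 1 : Fin (2 * n) → ℝ) = v := by
  simp [← Pi.single_smul]
  exact Finset.univ_sum_single v

lemma Nop_apply (x : E n) : Nop n x = ∑ q, av n q * dC n q x := by
  simp [Nop, LinearMap.sum_apply]

lemma Nop_ι_mul (v : Fin (2 * n) → ℝ) (x : E n) :
    Nop n (ι ℝ v * x) = ι ℝ v * x + ι ℝ v * Nop n x := by
  rw [Nop_apply, Nop_apply]
  have h1 : ∀ q, av n q * dC n q (ι ℝ v * x)
      = v q • (av n q * x) + ι ℝ v * (av n q * dC n q x) := by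
    intro q
    rw [dC_ι_mul, mul_sub, mul_smul_comm, ← mul_assoc, av, ι_swap, neg_mul, mul_assoc,
      sub_eq_add_neg, neg_neg]
  simp_rw [h1, Finset.sum_add_distrib, ← Finset.mul_sum]
  congr 1
  have : ∀ q : Fin (2*n), v q • (av n q * x) = (v q • av n q) * x := by
    intro q; rw [smul_mul_assoc]
  simp_rw [this, ← Finset.sum_mul]
  congr 1
  simp_rw [av, ← map_smul, ← map_sum, sum_smul_single]


lemma dC_mem_pow (q : Fin (2 * n)) {k : ℕ} {x : E n} (hx : x ∈ V n ^ k) :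
    dC n q x ∈ V n ^ (k - 1) := by
  induction hx using Submodule.pow_induction_on_left' with
  | algebraMap r => rw [dC_algebraMap]; exact Submodule.zero_mem _
  | add x y i hx hy ihx ihy => rw [map_add]; exact Submodule.add_mem _ ihx ihy
  | mem_mul m hm i x hx ih =>
    obtain ⟨v, rfl⟩ := hm
    rw [dC_ι_mul]
    refine Submodule.sub_mem _ (Submodule.smul_mem _ _ ?_) ?_
    · simpa using hx
    · cases i with
      | zero =>
        rw [pow_zero] at hx
        obtain ⟨r, rfl⟩ := Submodule.mem_one.mp hx
        rw [dC_algebraMap, mul_zero]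
        exact Submodule.zero_mem _
      | succ j =>
        simp only [Nat.add_sub_cancel] at ih
        rw [Nat.succ_sub_one, pow_succ']
        exact Submodule.mul_mem_mul (LinearMap.mem_range_self _ v) ih

lemma Nop_grade {k : ℕ} {x : E n} (hx : x ∈ V n ^ k) : Nop n x = (k : ℝ) • x := by
  induction hx using Submodule.pow_induction_on_left' with
  | algebraMap r => simp [Nop_apply, dC_algebraMap]
  | add x y i hx hy ihx ihy => rw [map_add, ihx, ihy, smul_add]
  | mem_mul m hm i x hx ih =>
    obtain ⟨v, rfl⟩ := hm
    rw [Nop_ι_mul, ih, mul_smul_comm]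
    push_cast
    rw [add_smul, one_smul, add_comm]

lemma Lam_apply (x : E n) : Lam n x = ∑ j, dC n (fj n j) (dC n (sj n j) x) := by
  simp [Lam, LinearMap.sum_apply]

lemma Lam_mem_pow {k : ℕ} {x : E n} (hx : x ∈ V n ^ k) : Lam n x ∈ V n ^ (k - 2) := by
  rw [Lam_apply]
  refine Submodule.sum_mem _ fun j _ => ?_
  have h1 := dC_mem_pow (fj n j) (dC_mem_pow (sj n j) hx)
  rwa [show k - 1 - 1 = k - 2 by omega] at h1

lemma ω_mem_pow : ω n ∈ V n ^ 2 := by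
  refine Submodule.sum_mem _ fun j _ => ?_
  rw [pow_two]
  exact Submodule.mul_mem_mul (LinearMap.mem_range_self _ _) (LinearMap.mem_range_self _ _)

lemma mul_ω_mem_pow {k : ℕ} {x : E n} (hx : x ∈ V n ^ k) : ω n * x ∈ V n ^ (k + 2) := by
  rw [show k + 2 = 2 + k by omega, pow_add]
  exact Submodule.mul_mem_mul ω_mem_pow hx


lemma sj_ne_fj (i j : Fin n) : sj n j ≠ fj n i := by
  simp only [sj, fj, ne_eq, Fin.mk.injEq]
  have := i.2; omega

lemma fj_ne_sj (i j : Fin n) : fj n j ≠ sj n i := by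
  simp only [sj, fj, ne_eq, Fin.mk.injEq]
  have := j.2; omega

lemma sj_eq_sj {i j : Fin n} : sj n j = sj n i ↔ i = j := by
  simp only [sj, Fin.mk.injEq, Fin.ext_iff]
  omega

lemma fj_eq_fj {i j : Fin n} : fj n j = fj n i ↔ i = j := by
  simp only [fj, Fin.mk.injEq, Fin.ext_iff]
  omega

lemma ω_mul (x : E n) : ω n * x = ∑ i, av n (fj n i) * (av n (sj n i) * x) := by
  rw [ω, Finset.sum_mul]
  simp_rw [mul_assoc]

lemma dC_sj_ω_mul (j : Fin n) (x : E n) :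
    dC n (sj n j) (ω n * x) = -(av n (fj n j) * x) + ω n * dC n (sj n j) x := by
  rw [ω_mul, map_sum]
  have h : ∀ i : Fin n, dC n (sj n j) (av n (fj n i) * (av n (sj n i) * x))
      = av n (fj n i) * (av n (sj n i) * dC n (sj n j) x)
        - (if i = j then av n (fj n j) * x else 0) := by
    intro i
    rw [dC_av_mul, if_neg (sj_ne_fj i j), zero_smul, zero_sub, dC_av_mul]
    simp only [sj_eq_sj]
    by_cases h : i = j
    · subst h
      rw [if_pos rfl, if_pos rfl, one_smul, mul_sub, neg_sub]
    · rw [if_neg h, if_neg h, zero_smul, zero_sub, mul_neg, neg_neg, sub_zero]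
  simp_rw [h]
  rw [Finset.sum_sub_distrib, Finset.sum_ite_eq' Finset.univ j
    (fun _ => av n (fj n j) * x), if_pos (Finset.mem_univ j), ← ω_mul]
  abel

lemma dC_fj_ω_mul (j : Fin n) (y : E n) :
    dC n (fj n j) (ω n * y) = av n (sj n j) * y + ω n * dC n (fj n j) y := by
  rw [ω_mul, map_sum]
  have h : ∀ i : Fin n, dC n (fj n j) (av n (fj n i) * (av n (sj n i) * y))
      = av n (fj n i) * (av n (sj n i) * dC n (fj n j) y)
        + (if i = j then av n (sj n j) * y else 0) := by
    intro i
    rw [dC_av_mul, dC_av_mul, if_neg (fj_ne_sj i j), zero_smul, zero_sub, mul_neg,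
      sub_neg_eq_add]
    simp only [fj_eq_fj]
    by_cases h : i = j
    · subst h
      rw [if_pos rfl, if_pos rfl, one_smul]
      abel
    · rw [if_neg h, if_neg h, zero_smul, zero_add, add_zero]
  simp_rw [h]
  rw [Finset.sum_add_distrib, Finset.sum_ite_eq' Finset.univ j
    (fun _ => av n (sj n j) * y), if_pos (Finset.mem_univ j), ← ω_mul]
  abel

lemma key_identity (x : E n) :
    Lam n (ω n * x) = ω n * Lam n x + Nop n x - (n : ℝ) • x := by
  rw [Lam_apply]
  have h : ∀ j : Fin n, dC n (fj n j) (dC n (sj n j) (ω n * x))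
      = ω n * dC n (fj n j) (dC n (sj n j) x)
        + (av n (fj n j) * dC n (fj n j) x + av n (sj n j) * dC n (sj n j) x) - x := by
    intro j
    rw [dC_sj_ω_mul, map_add, map_neg, dC_av_mul, if_pos rfl, one_smul, dC_fj_ω_mul]
    abel
  simp_rw [h]
  rw [Finset.sum_sub_distrib, Finset.sum_add_distrib, ← Finset.mul_sum, ← Lam_apply,
    Finset.sum_const, Finset.card_univ, Fintype.card_fin,
    ← Nat.cast_smul_eq_nsmul ℝ n x]
  have hmid : ∑ j : Fin n, (av n (fj n j) * dC n (fj n j) x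
      + av n (sj n j) * dC n (sj n j) x) = Nop n x := by
    rw [Finset.sum_add_distrib, Nop_apply,
      ← Equiv.sum_comp (finSumFinEquiv.trans (finCongr (two_mul n).symm))
        (fun q => av n q * dC n q x), Fintype.sum_sum_type]
    simp only [Equiv.trans_apply, finSumFinEquiv_apply_left, finSumFinEquiv_apply_right]
    have h1 : ∀ j : Fin n, (finCongr (two_mul n).symm) (Fin.castAdd n j) = fj n j := by
      intro j; ext; simp [fj]
    have h2 : ∀ j : Fin n, (finCongr (two_mul n).symm) (Fin.natAdd n j) = sj n j := by
      intro j; ext; simp [sj]; omega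
    simp_rw [h1, h2]
  rw [hmid]


lemma Lam_V0 {x : E n} (hx : x ∈ V n ^ 0) : Lam n x = 0 := by
  rw [pow_zero] at hx
  obtain ⟨r, rfl⟩ := Submodule.mem_one.mp hx
  rw [Lam_apply]
  simp [dC_algebraMap]

lemma Lam_V1 {x : E n} (hx : x ∈ V n ^ 1) : Lam n x = 0 := by
  rw [pow_one] at hx
  obtain ⟨v, rfl⟩ := hx
  rw [Lam_apply]
  have : ∀ j : Fin n, dC n (sj n j) (ι ℝ v) = algebraMap ℝ (E n) (v (sj n j)) := by
    intro j; exact CliffordAlgebra.contractLeft_ι _ _ _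
  simp [this, dC_algebraMap]

lemma Lam_iterate_mem (r : ℕ) {j : ℕ} {x : E n} (hx : x ∈ V n ^ j) :
    (Lam n)^[r] x ∈ V n ^ (j - 2 * r) := by
  induction r with
  | zero => simpa using hx
  | succ r ih =>
    rw [Function.iterate_succ_apply']
    have := Lam_mem_pow ih
    rwa [show j - 2 * r - 2 = j - 2 * (r + 1) by omega] at this

lemma Lam_iterate_zero_of_low (r : ℕ) : ∀ {j : ℕ} {x : E n}, x ∈ V n ^ j → j ≤ 2 * r + 1 →
    (Lam n)^[r+1] x = 0 := by
  induction r with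
  | zero =>
    intro j x hx hj
    simp only [zero_add, Function.iterate_one]
    interval_cases j
    · exact Lam_V0 hx
    · exact Lam_V1 hx
  | succ r ih =>
    intro j x hx hj
    rw [Function.iterate_succ_apply]
    exact ih (Lam_mem_pow hx) (by omega)

lemma iter_comm (r : ℕ) : ∀ {j : ℕ} {x : E n}, x ∈ V n ^ j →
    (Lam n)^[r+1] (ω n * x)
      = ω n * ((Lam n)^[r+1] x) + (((r : ℝ) + 1) * ((j : ℝ) - n - r)) • ((Lam n)^[r] x) := by
  induction r with
  | zero =>
    intro j x hx
    simp only [zero_add, Function.iterate_one, Function.iterate_zero, id_eq,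
      Nat.cast_zero]
    rw [key_identity, Nop_grade hx]
    match_scalars <;> ring
  | succ r ih =>
    intro j x hx
    by_cases hj : 2 * (r + 1) ≤ j
    · have hm : (Lam n)^[r+1] x ∈ V n ^ (j - 2 * (r+1)) := Lam_iterate_mem (r+1) hx
      rw [Function.iterate_succ_apply' (Lam n) (r+1), Function.iterate_succ_apply' (Lam n) (r+1),
        ih hx, map_add, map_smul, key_identity, Nop_grade hm, Nat.cast_sub hj,
        ← Function.iterate_succ_apply' (Lam n) r x]
      match_scalars <;> push_cast <;> ring
    · have h0 : (Lam n)^[r+1] x = 0 := Lam_iterate_zero_of_low r hx (by omega)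
      rw [Function.iterate_succ_apply' (Lam n) (r+1), Function.iterate_succ_apply' (Lam n) (r+1),
        ih hx, map_add, map_smul, ← Function.iterate_succ_apply' (Lam n) r x, h0]
      simp

lemma ι_sq_zero' (x y : Fin (2 * n) → ℝ) :
    (ι ℝ x * ι ℝ y) * (ι ℝ x * ι ℝ y) = (0 : E n) := by
  have h1 : ι ℝ y * (ι ℝ x * ι ℝ y) = 0 := by
    rw [← mul_assoc, ι_swap x y, neg_mul, mul_assoc, ι_sq_zero, mul_zero, neg_zero]
  rw [mul_assoc, h1, mul_zero]

lemma comm1 (u z w : Fin (2 * n) → ℝ) :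
    ι ℝ u * (ι ℝ z * ι ℝ w) = (ι ℝ z * ι ℝ w) * ι ℝ u := by
  calc ι ℝ u * (ι ℝ z * ι ℝ w) = (ι ℝ u * ι ℝ z) * ι ℝ w := (mul_assoc _ _ _).symm
    _ = -(ι ℝ z * ι ℝ u) * ι ℝ w := by rw [ι_swap z u]
    _ = -(ι ℝ z * (ι ℝ u * ι ℝ w)) := by rw [neg_mul, mul_assoc]
    _ = -(ι ℝ z * -(ι ℝ w * ι ℝ u)) := by rw [ι_swap w u]
    _ = ι ℝ z * (ι ℝ w * ι ℝ u) := by rw [mul_neg, neg_neg]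
    _ = (ι ℝ z * ι ℝ w) * ι ℝ u := (mul_assoc _ _ _).symm

lemma comm2 (x y z w : Fin (2 * n) → ℝ) :
    (ι ℝ x * ι ℝ y) * (ι ℝ z * ι ℝ w) = ((ι ℝ z * ι ℝ w) * (ι ℝ x * ι ℝ y) : E n) := by
  rw [mul_assoc, comm1 y z w, ← mul_assoc, comm1 x z w, mul_assoc]

lemma sum_sq_zero_pow {A : Type*} [Ring A] {I : Type*} [DecidableEq I] (P : I → A)
    (hc : ∀ i j, P i * P j = P j * P i) (hs : ∀ i, P i * P i = 0) (s : Finset I) :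
    (∑ i ∈ s, P i) ^ (s.card + 1) = 0 := by
  induction s using Finset.induction_on with
  | empty => simp
  | insert a s ha ih =>
    rw [Finset.sum_insert ha, Finset.card_insert_of_notMem ha]
    have hcomm : Commute (P a) (∑ i ∈ s, P i) :=
      Commute.sum_right s _ _ (fun i _ => hc a i)
    rw [Commute.add_pow hcomm]
    apply Finset.sum_eq_zero
    intro m hm
    match m with
    | 0 =>
      rw [Nat.sub_zero, show s.card + 1 + 1 = s.card + 1 + 1 by rfl, pow_succ, ih, zero_mul,
        pow_zero, one_mul, zero_mul]
    | 1 =>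
      rw [show s.card + 1 + 1 - 1 = s.card + 1 by omega, ih, mul_zero, zero_mul]
    | (m + 2) =>
      rw [pow_succ, pow_succ, mul_assoc (P a ^ m), hs, mul_zero, zero_mul, zero_mul]

lemma ω_pow_zero : ω n ^ (n + 1) = 0 := by
  have := sum_sq_zero_pow (fun j : Fin n => av n (fj n j) * av n (sj n j))
    (fun i j => comm2 _ _ _ _) (fun i => ι_sq_zero' _ _) Finset.univ
  rwa [Finset.card_univ, Fintype.card_fin, ← ω] at this

lemma ω_pow_mul_mem (r : ℕ) {k : ℕ} {x : E n} (hx : x ∈ V n ^ k) :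
    ω n ^ r * x ∈ V n ^ (k + 2 * r) := by
  induction r with
  | zero => simpa using hx
  | succ r ih =>
    rw [pow_succ', mul_assoc]
    have := mul_ω_mem_pow ih
    rwa [show k + 2 * r + 2 = k + 2 * (r + 1) by omega] at this


set_option maxHeartbeats 1000000 in
lemma main_aux {k : ℕ} (hk : n < k) {ξ : E n} (hξ : ξ ∈ V n ^ k) :
    ∃ η ∈ V n ^ (k - 2), ξ = ω n * η := by
  have key : ∀ t, t ≤ n + 1 → ∃ η ∈ V n ^ (k - 2),
      (Lam n)^[n+1-t] (ω n ^ (n+1-t) * ξ) = ω n * η := by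
    intro t
    induction t with
    | zero =>
      intro _
      refine ⟨0, Submodule.zero_mem _, ?_⟩
      rw [Nat.sub_zero, ω_pow_zero, zero_mul, mul_zero]
      exact Function.iterate_fixed (map_zero _) _
    | succ t iht =>
      intro ht
      obtain ⟨η, hη, heq⟩ := iht (by omega)
      have h1 : n + 1 - t = (n - t) + 1 := by omega
      have h2 : n + 1 - (t+1) = n - t := by omega
      set r := n - t with hr
      rw [h1] at heq
      rw [h2]
      have hmem : ω n ^ r * ξ ∈ V n ^ (k + 2*r) := ω_pow_mul_mem r hξ
      have hrec := iter_comm r hmem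
      have hpow : ω n ^ (r+1) * ξ = ω n * (ω n ^ r * ξ) := by rw [pow_succ', mul_assoc]
      rw [← hpow, heq] at hrec
      set c : ℝ := ((r:ℝ)+1) * (((k + 2*r : ℕ):ℝ) - n - r) with hc
      have hc0 : c ≠ 0 := by
        have hkn : (n:ℝ) < k := by exact_mod_cast hk
        have hcast : ((k+2*r:ℕ):ℝ) = (k:ℝ) + 2*r := by push_cast; ring
        rw [hc, hcast]
        have h3 : (0:ℝ) ≤ (r:ℝ) := Nat.cast_nonneg r
        nlinarith
      set ζ := (Lam n)^[r+1] (ω n ^ r * ξ) with hζ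
      have hζmem : ζ ∈ V n ^ (k - 2) := by
        have := Lam_iterate_mem (r+1) hmem
        rwa [show k + 2*r - 2*(r+1) = k - 2 by omega] at this
      refine ⟨c⁻¹ • (η - ζ), Submodule.smul_mem _ _ (Submodule.sub_mem _ hη hζmem), ?_⟩
      have hce : c • (Lam n)^[r] (ω n ^ r * ξ) = ω n * (η - ζ) := by
        rw [mul_sub]
        exact (eq_sub_of_add_eq' hrec.symm)
      calc (Lam n)^[r] (ω n ^ r * ξ)
          = c⁻¹ • (c • (Lam n)^[r] (ω n ^ r * ξ)) := by
            rw [smul_smul, inv_mul_cancel₀ hc0, one_smul]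
        _ = c⁻¹ • (ω n * (η - ζ)) := by rw [hce]
        _ = ω n * (c⁻¹ • (η - ζ)) := (mul_smul_comm _ _ _).symm
  obtain ⟨η, hη, heq⟩ := key (n+1) le_rfl
  rw [Nat.sub_self] at heq
  simp only [pow_zero, one_mul, Function.iterate_zero, id_eq] at heq
  exact ⟨η, hη, heq⟩


lemma ω_eq_sympVec : ω n = sympVec n := rfl

lemma extGrade_eq (k : ℕ) : extGrade n k = V n ^ k := rfl

end SympAux

/-- For `n < k`, the Lefschetz operator `L : ⋀^{k−2}(ℝ^{2n}) → ⋀^k(ℝ^{2n})`,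
`L(η) = ω ∧ η`, is surjective: every element of `⋀^k(ℝ^{2n})` is divisible by `ω`. -/
theorem stmt7 (n k : ℕ) (hn : 1 ≤ n) (hk : n < k) :
    ∀ ξ ∈ extGrade n k, ∃ η ∈ extGrade n (k - 2), ξ = sympVec n * η := by
  intro ξ hξ
  rw [SympAux.extGrade_eq] at hξ
  obtain ⟨η, hη, heq⟩ := SympAux.main_aux hk hξ
  refine ⟨η, ?_, ?_⟩
  · rw [SympAux.extGrade_eq]; exact hη
  · rw [heq, SympAux.ω_eq_sympVec]
end
end

section
/- Let n ≥ 1 and 0 ≤ k ≤ n. Then ⋀^k(ℝ^{2n}) is the internal direct sum of the kernel of L^{n−k+1} : ⋀^k(ℝ^{2n}) → ⋀^{2n−k+2}(ℝ^{2n}) and the image of L : ⋀^{k−2}(ℝ^{2n}) → ⋀^k(ℝ^{2n}) (with the convention that this image is {0} when k < 2). -/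
noncomputable section

namespace Stmt8Aux

open ExteriorAlgebra

abbrev E (n : ℕ) := ExteriorAlgebra ℝ (Fin (2 * n) → ℝ)

/-- standard basis vector -/
def eV (n : ℕ) (i : Fin (2 * n)) : Fin (2 * n) → ℝ := Pi.single i 1

/-- coordinate functional -/
def fV (n : ℕ) (i : Fin (2 * n)) : Module.Dual ℝ (Fin (2 * n) → ℝ) := LinearMap.proj i

/-- contraction by the `i`-th coordinate functional -/
def Dc (n : ℕ) (i : Fin (2 * n)) : E n →ₗ[ℝ] E n :=
  CliffordAlgebra.contractLeft (fV n i)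

def ja (n : ℕ) (j : Fin n) : Fin (2 * n) := ⟨j.1, by have := j.2; omega⟩
def jb (n : ℕ) (j : Fin n) : Fin (2 * n) := ⟨n + j.1, by have := j.2; omega⟩

lemma sympVec_eq (n : ℕ) :
    sympVec n = ∑ j : Fin n, ι ℝ (eV n (ja n j)) * ι ℝ (eV n (jb n j)) := rfl

lemma fV_apply (n : ℕ) (i : Fin (2 * n)) (v : Fin (2 * n) → ℝ) : fV n i v = v i := rfl

lemma eV_apply (n : ℕ) (i i' : Fin (2 * n)) :
    eV n i i' = if i = i' then 1 else 0 := by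
  simp [eV, Pi.single_apply, eq_comm]

lemma Dc_ι_mul (n : ℕ) (i : Fin (2 * n)) (v : Fin (2 * n) → ℝ) (x : E n) :
    Dc n i (ι ℝ v * x) = v i • x - ι ℝ v * Dc n i x :=
  CliffordAlgebra.contractLeft_ι_mul _ _ _

lemma Dc_algebraMap (n : ℕ) (i : Fin (2 * n)) (r : ℝ) :
    Dc n i (algebraMap ℝ (E n) r) = 0 :=
  CliffordAlgebra.contractLeft_algebraMap _ _ _

lemma Dc_ι (n : ℕ) (i : Fin (2 * n)) (v : Fin (2 * n) → ℝ) :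
    Dc n i (ι ℝ v) = algebraMap ℝ (E n) (v i) :=
  CliffordAlgebra.contractLeft_ι _ _ _

lemma extGrade_def (n k : ℕ) :
    extGrade n k =
      (LinearMap.range (ι ℝ : (Fin (2 * n) → ℝ) →ₗ[ℝ] E n)) ^ k := rfl

lemma ι_mem_grade (n : ℕ) (v : Fin (2 * n) → ℝ) : ι ℝ v ∈ extGrade n 1 := by
  rw [extGrade_def, pow_one]
  exact LinearMap.mem_range_self _ _

lemma mul_mem_grade {n a b : ℕ} {x y : E n} (hx : x ∈ extGrade n a)
    (hy : y ∈ extGrade n b) : x * y ∈ extGrade n (a + b) := by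
  rw [extGrade_def, pow_add]
  exact Submodule.mul_mem_mul hx hy

lemma one_mem_grade (n : ℕ) : (1 : E n) ∈ extGrade n 0 := by
  rw [extGrade_def, pow_zero]
  exact Submodule.one_le.1 le_rfl

lemma algebraMap_mem_grade (n : ℕ) (r : ℝ) :
    algebraMap ℝ (E n) r ∈ extGrade n 0 := by
  rw [extGrade_def, pow_zero]
  exact Submodule.algebraMap_mem r

lemma sympVec_mem_grade (n : ℕ) : sympVec n ∈ extGrade n 2 := by
  rw [sympVec_eq]
  refine Submodule.sum_mem _ fun j _ => ?_
  exact mul_mem_grade (ι_mem_grade n _) (ι_mem_grade n _)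

lemma sympVec_pow_mem_grade (n m : ℕ) : sympVec n ^ m ∈ extGrade n (2 * m) := by
  induction m with
  | zero => simpa using one_mem_grade n
  | succ m ih =>
      have : 2 * (m + 1) = 2 + 2 * m := by ring
      rw [this, pow_succ']
      exact mul_mem_grade (sympVec_mem_grade n) ih

lemma grade_zero_eq (n : ℕ) {x : E n} (hx : x ∈ extGrade n 0) :
    ∃ r : ℝ, x = algebraMap ℝ (E n) r := by
  rw [extGrade_def, pow_zero] at hx
  obtain ⟨r, hr⟩ := Submodule.mem_one.mp hx
  exact ⟨r, hr.symm⟩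

lemma Dc_grade (n : ℕ) (i : Fin (2 * n)) :
    ∀ {k : ℕ} {x : E n}, x ∈ extGrade n k →
      Dc n i x ∈ extGrade n (k - 1) ∧ (k = 0 → Dc n i x = 0) := by
  intro k x hx
  rw [extGrade_def] at hx
  refine Submodule.pow_induction_on_left'
    (M := LinearMap.range (ι ℝ : (Fin (2 * n) → ℝ) →ₗ[ℝ] E n))
    (C := fun k x _ => Dc n i x ∈ extGrade n (k - 1) ∧ (k = 0 → Dc n i x = 0))
    ?_ ?_ ?_ hx
  · intro r
    constructor
    · rw [Dc_algebraMap]; exact Submodule.zero_mem _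
    · intro _; rw [Dc_algebraMap]
  · intro x y m hx hy ihx ihy
    constructor
    · rw [map_add]; exact Submodule.add_mem _ ihx.1 ihy.1
    · intro hm; rw [map_add, ihx.2 hm, ihy.2 hm, add_zero]
  · rintro m ⟨v, rfl⟩ m' x hx ih
    constructor
    · rw [Dc_ι_mul]
      refine Submodule.sub_mem _ ?_ ?_
      · simp only [Nat.succ_sub_one]
        exact Submodule.smul_mem _ _ hx
      · rcases Nat.eq_zero_or_pos m' with h0 | hpos
        · subst h0
          rw [ih.2 rfl, mul_zero]
          exact Submodule.zero_mem _
        · have h1 : m' = 1 + (m' - 1) := by omega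
          have := mul_mem_grade (ι_mem_grade n v) ih.1
          rw [Nat.succ_sub_one, h1]
          exact this
    · intro h; exact absurd h (Nat.succ_ne_zero m')

/-- the number operator -/
def Nop (n : ℕ) : E n →ₗ[ℝ] E n :=
  ∑ i : Fin (2 * n), (LinearMap.mulLeft ℝ (ι ℝ (eV n i))) ∘ₗ Dc n i

lemma Nop_apply (n : ℕ) (x : E n) :
    Nop n x = ∑ i : Fin (2 * n), ι ℝ (eV n i) * Dc n i x := by
  simp [Nop, LinearMap.sum_apply]

lemma Nop_grade (n : ℕ) : ∀ {k : ℕ} {x : E n}, x ∈ extGrade n k →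
    Nop n x = (k : ℝ) • x := by
  intro k x hx
  rw [extGrade_def] at hx
  refine Submodule.pow_induction_on_left'
    (M := LinearMap.range (ι ℝ : (Fin (2 * n) → ℝ) →ₗ[ℝ] E n))
    (C := fun k x _ => Nop n x = (k : ℝ) • x) ?_ ?_ ?_ hx
  · intro r
    rw [Nop_apply]
    simp [Dc_algebraMap]
  · intro x y m hx hy ihx ihy
    rw [map_add, ihx, ihy, smul_add]
  · rintro m ⟨v, rfl⟩ m' x hx ih
    rw [Nop_apply]
    have key : ∀ i : Fin (2 * n), ι ℝ (eV n i) * Dc n i (ι ℝ v * x)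
        = v i • (ι ℝ (eV n i) * x) + ι ℝ v * (ι ℝ (eV n i) * Dc n i x) := by
      intro i
      rw [Dc_ι_mul, mul_sub, mul_smul_comm]
      congr 1
      have swap : ι ℝ (eV n i) * ι ℝ v = -(ι ℝ v * ι ℝ (eV n i)) :=
        eq_neg_of_add_eq_zero_left (ι_add_mul_swap _ _)
      rw [← mul_assoc, swap, neg_mul, mul_assoc, sub_neg_eq_add]
    rw [Finset.sum_congr rfl (fun i _ => key i), Finset.sum_add_distrib]
    have h1 : ∑ i : Fin (2 * n), v i • (ι ℝ (eV n i) * x) = ι ℝ v * x := by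
      have : ∀ i : Fin (2 * n), v i • (ι ℝ (eV n i) * x)
          = ι ℝ (Pi.single i (v i)) * x := by
        intro i
        rw [← smul_mul_assoc, ← map_smul]
        congr 2
        simp only [eV, ← Pi.single_smul, smul_eq_mul, mul_one]
      rw [Finset.sum_congr rfl fun i _ => this i, ← Finset.sum_mul, ← map_sum]
      congr 2
      exact Finset.univ_sum_single v
    have h2 : ∑ i : Fin (2 * n), ι ℝ v * (ι ℝ (eV n i) * Dc n i x)
        = ι ℝ v * Nop n x := by
      rw [← Finset.mul_sum, Nop_apply]
    rw [h1, h2, ih, mul_smul_comm]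
    push_cast
    rw [add_smul, one_smul, add_comm]

lemma Dc_mul_pair (n : ℕ) (i : Fin (2 * n)) (a b : Fin (2 * n) → ℝ) (x : E n) :
    Dc n i (ι ℝ a * ι ℝ b * x)
      = a i • (ι ℝ b * x) - b i • (ι ℝ a * x) + ι ℝ a * (ι ℝ b * Dc n i x) := by
  rw [mul_assoc, Dc_ι_mul, Dc_ι_mul, mul_sub, mul_smul_comm]
  abel

lemma Dc_omega_mul (n : ℕ) (i : Fin (2 * n)) (x : E n) :
    Dc n i (sympVec n * x) =
      (∑ j : Fin n, (eV n (ja n j) i • (ι ℝ (eV n (jb n j)) * x)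
        - eV n (jb n j) i • (ι ℝ (eV n (ja n j)) * x)))
      + sympVec n * Dc n i x := by
  rw [sympVec_eq, Finset.sum_mul, map_sum,
    Finset.sum_congr rfl (fun j _ => Dc_mul_pair n i _ _ x), Finset.sum_add_distrib,
    Finset.sum_mul]
  congr 1
  exact Finset.sum_congr rfl fun j _ => (mul_assoc _ _ _).symm

lemma ja_ne_jb (n : ℕ) (l j : Fin n) : ja n l ≠ jb n j := by
  intro h
  have h1 : (ja n l).1 = (jb n j).1 := congrArg Fin.val h
  simp only [ja, jb] at h1
  omega

lemma jb_eq_iff (n : ℕ) (l j : Fin n) : jb n l = jb n j ↔ l = j := by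
  constructor
  · intro h
    have h1 : (jb n l).1 = (jb n j).1 := congrArg Fin.val h
    simp only [jb] at h1
    exact Fin.ext (by omega)
  · rintro rfl; rfl

lemma ja_eq_iff (n : ℕ) (l j : Fin n) : ja n l = ja n j ↔ l = j := by
  constructor
  · intro h
    have h1 : (ja n l).1 = (ja n j).1 := congrArg Fin.val h
    simp only [ja] at h1
    exact Fin.ext (by omega)
  · rintro rfl; rfl

lemma Dc_jb_omega (n : ℕ) (j : Fin n) (x : E n) :
    Dc n (jb n j) (sympVec n * x)
      = -(ι ℝ (eV n (ja n j)) * x) + sympVec n * Dc n (jb n j) x := by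
  rw [Dc_omega_mul]
  congr 1
  have : ∀ l : Fin n, eV n (ja n l) (jb n j) • (ι ℝ (eV n (jb n l)) * x)
      - eV n (jb n l) (jb n j) • (ι ℝ (eV n (ja n l)) * x)
      = -(if l = j then ι ℝ (eV n (ja n l)) * x else 0) := by
    intro l
    rw [eV_apply, eV_apply, if_neg (ja_ne_jb n l j)]
    by_cases h : l = j
    · rw [if_pos ((jb_eq_iff n l j).2 h), if_pos h]; simp
    · rw [if_neg (fun hh => h ((jb_eq_iff n l j).1 hh)), if_neg h]; simp
  rw [Finset.sum_congr rfl fun l _ => this l]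
  simp

lemma Dc_ja_omega (n : ℕ) (j : Fin n) (x : E n) :
    Dc n (ja n j) (sympVec n * x)
      = (ι ℝ (eV n (jb n j)) * x) + sympVec n * Dc n (ja n j) x := by
  rw [Dc_omega_mul]
  congr 1
  have : ∀ l : Fin n, eV n (ja n l) (ja n j) • (ι ℝ (eV n (jb n l)) * x)
      - eV n (jb n l) (ja n j) • (ι ℝ (eV n (ja n l)) * x)
      = (if l = j then ι ℝ (eV n (jb n l)) * x else 0) := by
    intro l
    rw [eV_apply, eV_apply, if_neg (Ne.symm (ja_ne_jb n j l))]
    by_cases h : l = j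
    · rw [if_pos ((ja_eq_iff n l j).2 h), if_pos h]; simp
    · rw [if_neg (fun hh => h ((ja_eq_iff n l j).1 hh)), if_neg h]; simp
  rw [Finset.sum_congr rfl fun l _ => this l]
  simp

/-- the dual Lefschetz operator -/
def Lam (n : ℕ) : E n →ₗ[ℝ] E n :=
  ∑ j : Fin n, (Dc n (ja n j)) ∘ₗ (Dc n (jb n j))

lemma Lam_apply (n : ℕ) (x : E n) :
    Lam n x = ∑ j : Fin n, Dc n (ja n j) (Dc n (jb n j) x) := by
  simp [Lam, LinearMap.sum_apply]

lemma sum_pair (n : ℕ) (T : Fin (2 * n) → E n) :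
    ∑ j : Fin n, (T (ja n j) + T (jb n j)) = ∑ i : Fin (2 * n), T i := by
  have h2 : (2 * n) = n + n := by omega
  let g : Fin n ⊕ Fin n ≃ Fin (2 * n) := finSumFinEquiv.trans (finCongr h2.symm)
  have := Equiv.sum_comp g T
  rw [← this, Fintype.sum_sum_type, ← Finset.sum_add_distrib]
  refine Finset.sum_congr rfl fun j _ => ?_
  have hga : g (Sum.inl j) = ja n j := Fin.ext (by simp [g, ja])
  have hgb : g (Sum.inr j) = jb n j := Fin.ext (by simp [g, jb]; omega)
  rw [hga, hgb]

lemma Lam_omega_mul (n : ℕ) {k : ℕ} {x : E n} (hx : x ∈ extGrade n k) :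
    Lam n (sympVec n * x) = sympVec n * Lam n x + ((k : ℝ) - n) • x := by
  rw [Lam_apply]
  have step : ∀ j : Fin n, Dc n (ja n j) (Dc n (jb n j) (sympVec n * x))
      = -x + (ι ℝ (eV n (ja n j)) * Dc n (ja n j) x
          + ι ℝ (eV n (jb n j)) * Dc n (jb n j) x)
        + sympVec n * Dc n (ja n j) (Dc n (jb n j) x) := by
    intro j
    rw [Dc_jb_omega, map_add, map_neg, Dc_ι_mul, Dc_ja_omega, eV_apply, if_pos rfl,
      one_smul]
    abel
  rw [Finset.sum_congr rfl fun j _ => step j, Finset.sum_add_distrib,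
    Finset.sum_add_distrib]
  have hA : ∑ _j : Fin n, (-x : E n) = -((n : ℝ) • x) := by
    rw [Finset.sum_const, Finset.card_univ, Fintype.card_fin]
    rw [← Nat.cast_smul_eq_nsmul ℝ, smul_neg]
  have hB : ∑ j : Fin n, (ι ℝ (eV n (ja n j)) * Dc n (ja n j) x
      + ι ℝ (eV n (jb n j)) * Dc n (jb n j) x) = (k : ℝ) • x := by
    rw [sum_pair n (fun i => ι ℝ (eV n i) * Dc n i x), ← Nop_apply, Nop_grade n hx]
  have hC : ∑ j : Fin n, sympVec n * Dc n (ja n j) (Dc n (jb n j) x)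
      = sympVec n * Lam n x := by
    rw [← Finset.mul_sum, Lam_apply]
  rw [hA, hB, hC, sub_smul]
  abel

lemma ι_swap (n : ℕ) (a b : Fin (2 * n) → ℝ) :
    ι ℝ a * ι ℝ b = -(ι ℝ b * ι ℝ a) :=
  eq_neg_of_add_eq_zero_left (ι_add_mul_swap _ _)

lemma even_comm (n : ℕ) (a b c : Fin (2 * n) → ℝ) :
    (ι ℝ a * ι ℝ b) * ι ℝ c = ι ℝ c * (ι ℝ a * ι ℝ b) := by
  calc (ι ℝ a * ι ℝ b) * ι ℝ c = ι ℝ a * (ι ℝ b * ι ℝ c) := mul_assoc _ _ _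
    _ = ι ℝ a * (-(ι ℝ c * ι ℝ b)) := by rw [ι_swap n b c]
    _ = -((ι ℝ a * ι ℝ c) * ι ℝ b) := by rw [mul_neg, mul_assoc]
    _ = (-(ι ℝ a * ι ℝ c)) * ι ℝ b := by rw [neg_mul]
    _ = (ι ℝ c * ι ℝ a) * ι ℝ b := by rw [← ι_swap n c a]
    _ = ι ℝ c * (ι ℝ a * ι ℝ b) := mul_assoc _ _ _

lemma pair_sq (n : ℕ) (a b : Fin (2 * n) → ℝ) :
    (ι ℝ a * ι ℝ b) * (ι ℝ a * ι ℝ b) = 0 := by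
  have h := even_comm n a b a
  calc (ι ℝ a * ι ℝ b) * (ι ℝ a * ι ℝ b)
      = ((ι ℝ a * ι ℝ b) * ι ℝ a) * ι ℝ b := (mul_assoc _ _ _).symm
    _ = (ι ℝ a * (ι ℝ a * ι ℝ b)) * ι ℝ b := by rw [h]
    _ = ((ι ℝ a * ι ℝ a) * ι ℝ b) * ι ℝ b := by rw [← mul_assoc]
    _ = 0 := by rw [ι_sq_zero, zero_mul, zero_mul]

lemma pair_commute (n : ℕ) (a b c d : Fin (2 * n) → ℝ) :
    Commute (ι ℝ a * ι ℝ b) (ι ℝ c * ι ℝ d) := by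
  unfold Commute SemiconjBy
  calc (ι ℝ a * ι ℝ b) * (ι ℝ c * ι ℝ d)
      = ((ι ℝ a * ι ℝ b) * ι ℝ c) * ι ℝ d := (mul_assoc _ _ _).symm
    _ = (ι ℝ c * (ι ℝ a * ι ℝ b)) * ι ℝ d := by rw [even_comm]
    _ = ι ℝ c * ((ι ℝ a * ι ℝ b) * ι ℝ d) := mul_assoc _ _ _
    _ = ι ℝ c * (ι ℝ d * (ι ℝ a * ι ℝ b)) := by rw [even_comm]
    _ = (ι ℝ c * ι ℝ d) * (ι ℝ a * ι ℝ b) := (mul_assoc _ _ _).symm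

lemma sum_sq_zero_pow {A : Type*} [Ring A] {α : Type*} [DecidableEq α] (s : Finset α) (f : α → A)
    (hsq : ∀ j ∈ s, f j * f j = 0)
    (hcomm : ∀ j ∈ s, ∀ l ∈ s, Commute (f j) (f l)) :
    (∑ j ∈ s, f j) ^ (s.card + 1) = 0 := by
  induction s using Finset.induction_on with
  | empty => simp
  | @insert a t ha ih =>
      have hcomm' : Commute (f a) (∑ j ∈ t, f j) :=
        Commute.sum_right _ _ _ fun l hl =>
          hcomm a (Finset.mem_insert_self a t) l (Finset.mem_insert_of_mem hl)
      rw [Finset.sum_insert ha, Commute.add_pow hcomm']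
      refine Finset.sum_eq_zero fun i _ => ?_
      have hS : (∑ j ∈ t, f j) ^ (t.card + 1) = 0 :=
        ih (fun j hj => hsq j (Finset.mem_insert_of_mem hj))
          (fun j hj l hl =>
            hcomm j (Finset.mem_insert_of_mem hj) l (Finset.mem_insert_of_mem hl))
      have hcard : (insert a t).card + 1 = t.card + 2 := by
        rw [Finset.card_insert_of_notMem ha]
      rcases Nat.lt_or_ge i 2 with hi | hi
      · interval_cases i
        · have : (∑ j ∈ t, f j) ^ ((insert a t).card + 1 - 0) = 0 := by
            rw [Nat.sub_zero, hcard]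
            exact pow_eq_zero_of_le (by omega) hS
          rw [this]; simp
        · have : (∑ j ∈ t, f j) ^ ((insert a t).card + 1 - 1) = 0 := by
            rw [hcard]
            exact pow_eq_zero_of_le (by omega) hS
          rw [this]; simp
      · have hfa : f a ^ i = 0 := by
          have h2 : f a ^ 2 = 0 := by
            rw [sq]; exact hsq a (Finset.mem_insert_self a t)
          exact pow_eq_zero_of_le hi h2
        rw [hfa]; simp

lemma omega_pow_succ_zero (n : ℕ) : sympVec n ^ (n + 1) = 0 := by
  rw [sympVec_eq]
  have := sum_sq_zero_pow (Finset.univ : Finset (Fin n))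
    (fun j => ι ℝ (eV n (ja n j)) * ι ℝ (eV n (jb n j)))
    (fun j _ => pair_sq n _ _) (fun j _ l _ => pair_commute n _ _ _ _)
  rwa [Finset.card_univ, Fintype.card_fin] at this

/-- primitive elements in grade `s` -/
def Prim (n s : ℕ) : Submodule ℝ (E n) := extGrade n s ⊓ LinearMap.ker (Lam n)

lemma Lam_grade_zero (n : ℕ) {x : E n} (hx : x ∈ extGrade n 0) : Lam n x = 0 := by
  obtain ⟨r, rfl⟩ := grade_zero_eq n hx
  rw [Lam_apply]
  refine Finset.sum_eq_zero fun j _ => ?_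
  rw [Dc_algebraMap, map_zero]

lemma Lam_grade_one (n : ℕ) {x : E n} (hx : x ∈ extGrade n 1) : Lam n x = 0 := by
  rw [extGrade_def, pow_one] at hx
  obtain ⟨v, rfl⟩ := hx
  rw [Lam_apply]
  refine Finset.sum_eq_zero fun j _ => ?_
  rw [Dc_ι, Dc_algebraMap]

lemma Lam_grade (n : ℕ) {k : ℕ} {x : E n} (hx : x ∈ extGrade n k) :
    Lam n x ∈ extGrade n (k - 2) := by
  rw [Lam_apply]
  refine Submodule.sum_mem _ fun j _ => ?_
  have h1 := (Dc_grade n (jb n j) hx).1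
  have h2 := (Dc_grade n (ja n j) h1).1
  rwa [Nat.sub_sub] at h2

lemma Lam_omega_pow (n : ℕ) {s : ℕ} {p : E n} (hp : p ∈ Prim n s) (m : ℕ) :
    Lam n (sympVec n ^ (m + 1) * p)
      = (((m : ℝ) + 1) * ((s : ℝ) + m - n)) • (sympVec n ^ m * p) := by
  induction m with
  | zero =>
      rw [pow_one, pow_zero, one_mul,
        Lam_omega_mul n hp.1, LinearMap.mem_ker.1 hp.2, mul_zero, zero_add]
      norm_num
  | succ m ih =>
      have hz : sympVec n ^ (m + 1) * p ∈ extGrade n (2 * (m + 1) + s) :=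
        mul_mem_grade (sympVec_pow_mem_grade n (m + 1)) hp.1
      rw [pow_succ' (sympVec n) (m + 1), mul_assoc, Lam_omega_mul n hz, ih,
        mul_smul_comm, ← mul_assoc, ← pow_succ']
      rw [← add_smul]
      congr 1
      push_cast
      ring

lemma prim_omega_zero (n : ℕ) {s : ℕ} {p : E n} (hp : p ∈ Prim n s) (hs : s ≤ n) :
    ∀ m, n + 1 ≤ m + s → sympVec n ^ m * p = 0 := by
  have aux : ∀ j, j ≤ s → sympVec n ^ (n + 1 - j) * p = 0 := by
    intro j
    induction j with
    | zero => intro _; rw [Nat.sub_zero, omega_pow_succ_zero, zero_mul]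
    | succ j ih =>
        intro hj
        have hprev : sympVec n ^ (n + 1 - j) * p = 0 := ih (by omega)
        have hrw : n + 1 - j = (n - j) + 1 := by omega
        rw [hrw] at hprev
        have := Lam_omega_pow n hp (n - j)
        rw [hprev, map_zero] at this
        have hco : (((n - j : ℕ) : ℝ) + 1) * ((s : ℝ) + (n - j : ℕ) - n) ≠ 0 := by
          have hc1 : ((n - j : ℕ) : ℝ) = (n : ℝ) - j := by
            have : j ≤ n := by omega
            push_cast [this]; ring
          rw [hc1]
          have hjs : (j : ℝ) + 1 ≤ (s : ℝ) := by exact_mod_cast hj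
          have hjn : (j : ℝ) ≤ (n : ℝ) := by exact_mod_cast (by omega : j ≤ n)
          have h2 : (s : ℝ) + ((n : ℝ) - j) - n ≥ 1 := by linarith
          have h1 : (n : ℝ) - j + 1 > 0 := by linarith
          positivity
        have hz := (smul_eq_zero.mp this.symm).resolve_left hco
        have : n + 1 - (j + 1) = n - j := by omega
        rw [this, hz]
  intro m hm
  rcases Nat.lt_or_ge m (n + 1) with hlt | hge
  · have hj : n + 1 - m ≤ s := by omega
    have := aux (n + 1 - m) hj
    have hmm : n + 1 - (n + 1 - m) = m := by omega
    rwa [hmm] at this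
  · have : m = (n + 1) + (m - (n + 1)) := by omega
    rw [this, pow_add, omega_pow_succ_zero, zero_mul, zero_mul]

lemma Lam_pow_omega_eq (n : ℕ) {s : ℕ} {p : E n} (hp : p ∈ Prim n s) :
    ∀ m, ∃ γ : ℝ, ((Lam n) ^ m) (sympVec n ^ m * p) = γ • p ∧ (s + m ≤ n → γ ≠ 0) := by
  intro m
  induction m with
  | zero => exact ⟨1, by simp, fun _ => one_ne_zero⟩
  | succ m ih =>
      obtain ⟨γ, hγ, hγne⟩ := ih
      refine ⟨(((m : ℝ) + 1) * ((s : ℝ) + m - n)) * γ, ?_, ?_⟩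
      · rw [pow_succ, Module.End.mul_apply, Lam_omega_pow n hp m, map_smul, hγ,
          smul_smul]
      · intro hle
        have h1 : ((m : ℝ) + 1) ≠ 0 := by positivity
        have h2 : ((s : ℝ) + m - n) ≠ 0 := by
          have : (s : ℝ) + m + 1 ≤ (n : ℝ) := by exact_mod_cast hle
          intro h; rw [sub_eq_zero] at h; linarith
        exact mul_ne_zero (mul_ne_zero h1 h2) (hγne (by omega))

lemma Lam_pow_omega_zero (n : ℕ) {s : ℕ} {p : E n} (hp : p ∈ Prim n s)
    {t m : ℕ} (hmt : m < t) : ((Lam n) ^ t) (sympVec n ^ m * p) = 0 := by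
  obtain ⟨d, rfl⟩ : ∃ d, t = d + (m + 1) := ⟨t - (m + 1), by omega⟩
  obtain ⟨γ, hγ, -⟩ := Lam_pow_omega_eq n hp m
  rw [pow_add, Module.End.mul_apply, pow_succ', Module.End.mul_apply, hγ, map_smul,
    LinearMap.mem_ker.1 hp.2, smul_zero, map_zero]

lemma decomp (n : ℕ) : ∀ k, k ≤ n → ∀ x ∈ extGrade n k, ∃ (N : ℕ) (c : ℕ → E n),
    (∀ j, c j ∈ Prim n (k - 2 * j)) ∧ (∀ j, 2 * j ≤ k ∨ c j = 0) ∧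
    x = ∑ j ∈ Finset.range N, sympVec n ^ j * c j := by
  intro k
  induction k using Nat.strong_induction_on with
  | _ k IH =>
  intro hk x hx
  match k, hk, hx, IH with
  | 0, hk, hx, IH | 1, hk, hx, IH =>
    refine ⟨1, fun j => Nat.casesOn j x (fun _ => 0), ?_, ?_, ?_⟩
    · intro j
      cases j with
      | zero =>
          show x ∈ Prim n _
          refine Submodule.mem_inf.2 ⟨by simpa using hx, LinearMap.mem_ker.2 ?_⟩
          first
            | exact Lam_grade_zero n hx
            | exact Lam_grade_one n hx
      | succ j' => exact Submodule.zero_mem _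
    · intro j
      cases j with
      | zero => left; omega
      | succ j' => right; rfl
    · rw [Finset.sum_range_one]
      show x = sympVec n ^ 0 * x
      rw [pow_zero, one_mul]
  | (m + 2), hk, hx, IH =>
    have hm : m ≤ n := by omega
    have hLx : Lam n x ∈ extGrade n m := by
      have := Lam_grade n hx
      rwa [show m + 2 - 2 = m by omega] at this
    obtain ⟨N, c, hcmem, hccond, hcsum⟩ := IH m (by omega) hm _ hLx
    set ω := sympVec n with hω
    set d : ℕ → ℝ := fun j => ((j : ℝ) + 1) * ((m : ℝ) - j - n) with hd
    have hdne : ∀ j, d j ≠ 0 := by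
      intro j
      have h1 : ((j : ℝ) + 1) ≠ 0 := by positivity
      have h2 : ((m : ℝ) - j - n) ≠ 0 := by
        have hmn : (m : ℝ) + 2 ≤ (n : ℝ) := by exact_mod_cast hk
        have hj0 : (0 : ℝ) ≤ (j : ℝ) := Nat.cast_nonneg j
        intro h; rw [sub_eq_zero] at h
        have : (m : ℝ) - j ≤ (m : ℝ) := by linarith
        linarith
      exact mul_ne_zero h1 h2
    set y : E n := ∑ j ∈ Finset.range N, (d j)⁻¹ • (ω ^ j * c j) with hy
    have hymem : y ∈ extGrade n m := by
      refine Submodule.sum_mem _ fun j hj => Submodule.smul_mem _ _ ?_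
      rcases hccond j with hcj | hcj
      · have := mul_mem_grade (sympVec_pow_mem_grade n j) (hcmem j).1
        rwa [show 2 * j + (m - 2 * j) = m by omega] at this
      · rw [hcj, mul_zero]; exact Submodule.zero_mem _
    have hωy : ω * y = ∑ j ∈ Finset.range N, (d j)⁻¹ • (ω ^ (j + 1) * c j) := by
      rw [hy, Finset.mul_sum]
      refine Finset.sum_congr rfl fun j _ => ?_
      rw [mul_smul_comm, ← mul_assoc, ← pow_succ']
    have hLωy : Lam n (ω * y) = Lam n x := by
      rw [hωy, map_sum, hcsum]
      refine Finset.sum_congr rfl fun j _ => ?_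
      rw [map_smul]
      rcases hccond j with hcj | hcj
      · rw [Lam_omega_pow n (hcmem j) j, smul_smul]
        have hcast : ((m - 2 * j : ℕ) : ℝ) = (m : ℝ) - 2 * j := by
          push_cast [hcj]; ring
        rw [hcast]
        have : (d j)⁻¹ * (((j : ℝ) + 1) * ((m : ℝ) - 2 * j + j - n)) = 1 := by
          rw [show (m : ℝ) - 2 * j + j - n = (m : ℝ) - j - n by ring, hd]
          exact inv_mul_cancel₀ (hdne j)
        rw [this, one_smul]
      · rw [hcj, mul_zero, mul_zero, map_zero, smul_zero]
    set p : E n := x - ω * y with hp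
    have hpmem : p ∈ Prim n (m + 2) :=
      Submodule.mem_inf.2 ⟨Submodule.sub_mem _ hx (by
          have := mul_mem_grade (sympVec_mem_grade n) hymem
          rwa [show 2 + m = m + 2 by omega] at this),
        LinearMap.mem_ker.2 (by rw [map_sub, hLωy, sub_self])⟩
    refine ⟨N + 1, fun j => Nat.casesOn j p (fun j' => (d j')⁻¹ • c j'), ?_, ?_, ?_⟩
    · intro j
      cases j with
      | zero =>
          show p ∈ Prim n (m + 2 - 2 * 0)
          rwa [show m + 2 - 2 * 0 = m + 2 by omega]
      | succ j' =>
          show (d j')⁻¹ • c j' ∈ Prim n (m + 2 - 2 * (j' + 1))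
          rw [show m + 2 - 2 * (j' + 1) = m - 2 * j' by omega]
          exact Submodule.smul_mem _ _ (hcmem j')
    · intro j
      cases j with
      | zero => left; omega
      | succ j' =>
          rcases hccond j' with h | h
          · left; omega
          · right; show (d j')⁻¹ • c j' = 0; rw [h, smul_zero]
    · rw [Finset.sum_range_succ']
      have htail : (∑ j ∈ Finset.range N,
          ω ^ (j + 1) * ((fun j => Nat.casesOn j p (fun j' => (d j')⁻¹ • c j')) (j + 1)))
          = ω * y := by
        rw [hωy]
        refine Finset.sum_congr rfl fun j _ => ?_
        show ω ^ (j + 1) * ((d j)⁻¹ • c j) = (d j)⁻¹ • (ω ^ (j + 1) * c j)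
        rw [mul_smul_comm]
      rw [htail]
      show x = ω * y + ω ^ 0 * p
      rw [pow_zero, one_mul, hp]
      abel

lemma split (n k : ℕ) (hk : k ≤ n) {x : E n} (hx : x ∈ extGrade n k) :
    ∃ p y, p ∈ Prim n k ∧ y ∈ extGrade n (k - 2) ∧ x = p + sympVec n * y := by
  obtain ⟨N, c, hcmem, hccond, hcsum⟩ := decomp n k hk x hx
  cases N with
  | zero =>
      refine ⟨0, 0, Submodule.zero_mem _, Submodule.zero_mem _, ?_⟩
      rw [hcsum]; simp
  | succ M =>
      refine ⟨c 0, ∑ j ∈ Finset.range M, sympVec n ^ j * c (j + 1), ?_, ?_, ?_⟩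
      · have := hcmem 0
        rwa [show k - 2 * 0 = k by omega] at this
      · refine Submodule.sum_mem _ fun j _ => ?_
        rcases hccond (j + 1) with h | h
        · have := mul_mem_grade (sympVec_pow_mem_grade n j) (hcmem (j + 1)).1
          rwa [show 2 * j + (k - 2 * (j + 1)) = k - 2 by omega] at this
        · rw [h, mul_zero]; exact Submodule.zero_mem _
      · rw [hcsum, Finset.sum_range_succ', pow_zero, one_mul, add_comm,
          Finset.mul_sum]
        congr 1
        refine Finset.sum_congr rfl fun j _ => ?_
        rw [← mul_assoc, ← pow_succ']

lemma sum_prim_zero (n : ℕ) {s : ℕ} (hs : s ≤ n) :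
    ∀ N (c : ℕ → E n), (∀ j, c j ∈ Prim n (s - 2 * j)) →
    (∀ j, 2 * j ≤ s ∨ c j = 0) →
    (∑ j ∈ Finset.range N, sympVec n ^ (n - s + j) * c j) = 0 → ∀ j < N, c j = 0 := by
  intro N
  induction N with
  | zero => intro c _ _ _ j hj; omega
  | succ N ih =>
      intro c hcmem hccond hsum j hj
      have htop : c N = 0 := by
        rcases hccond N with h2N | hcN
        · have happ := congrArg (((Lam n) ^ (n - s + N)) : E n →ₗ[ℝ] E n) hsum
          rw [map_sum, map_zero] at happ
          rw [Finset.sum_range_succ] at happ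
          have hzero : ∀ j ∈ Finset.range N,
              ((Lam n) ^ (n - s + N)) (sympVec n ^ (n - s + j) * c j) = 0 := by
            intro j hjN
            exact Lam_pow_omega_zero n (hcmem j)
              (by have := Finset.mem_range.1 hjN; omega)
          rw [Finset.sum_congr rfl hzero, Finset.sum_const, smul_zero, zero_add]
            at happ
          obtain ⟨γ, hγ, hγne⟩ := Lam_pow_omega_eq n (hcmem N) (n - s + N)
          rw [hγ] at happ
          have : γ ≠ 0 := hγne (by omega)
          exact (smul_eq_zero.1 happ).resolve_left this
        · exact hcN
      have hsum' : ∑ j ∈ Finset.range N, sympVec n ^ (n - s + j) * c j = 0 := by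
        rw [Finset.sum_range_succ, htop, mul_zero, add_zero] at hsum
        exact hsum
      rcases Nat.lt_or_ge j N with h | h
      · exact ih c hcmem hccond hsum' j h
      · have : j = N := by omega
        rw [this, htop]

lemma hl_inj (n : ℕ) {s : ℕ} (hs : s ≤ n) {y : E n} (hy : y ∈ extGrade n s)
    (h : sympVec n ^ (n - s) * y = 0) : y = 0 := by
  obtain ⟨N, c, hcmem, hccond, hcsum⟩ := decomp n s hs y hy
  have h2 : ∑ j ∈ Finset.range N, sympVec n ^ (n - s + j) * c j = 0 := by
    rw [hcsum, Finset.mul_sum] at h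
    rw [← h]
    refine Finset.sum_congr rfl fun j _ => ?_
    rw [← mul_assoc, ← pow_add]
  have hc0 := sum_prim_zero n hs N c hcmem hccond h2
  rw [hcsum]
  exact Finset.sum_eq_zero fun j hjr =>
    by rw [hc0 j (Finset.mem_range.1 hjr), mul_zero]

lemma prim_ker (n k : ℕ) (hk : k ≤ n) {p : E n} (hp : p ∈ Prim n k) :
    sympVec n ^ (n - k + 1) * p = 0 :=
  prim_omega_zero n hp hk (n - k + 1) (by omega)

end Stmt8Aux

set_option maxHeartbeats 2000000 in
open Stmt8Aux in
/-- For `0 ≤ k ≤ n`, `⋀^k(ℝ^{2n})` is the internal direct sum of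
`ker(L^{n−k+1} : ⋀^k → ⋀^{2n−k+2})` and the image of `L : ⋀^{k−2} → ⋀^k`
(the latter being `{0}` when `k < 2`). -/
theorem stmt8 (n k : ℕ) (hn : 1 ≤ n) (hk : k ≤ n) :
    (extGrade n k ⊓ LinearMap.ker (LinearMap.mulLeft ℝ (sympVec n ^ (n - k + 1)))) ⊓
        (if k < 2 then (⊥ : Submodule ℝ (ExteriorAlgebra ℝ (Fin (2 * n) → ℝ)))
          else Submodule.map (LinearMap.mulLeft ℝ (sympVec n)) (extGrade n (k - 2))) = ⊥ ∧
    (extGrade n k ⊓ LinearMap.ker (LinearMap.mulLeft ℝ (sympVec n ^ (n - k + 1)))) ⊔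
        (if k < 2 then (⊥ : Submodule ℝ (ExteriorAlgebra ℝ (Fin (2 * n) → ℝ)))
          else Submodule.map (LinearMap.mulLeft ℝ (sympVec n)) (extGrade n (k - 2)))
      = extGrade n k := by
  constructor
  · by_cases h2 : k < 2
    · rw [if_pos h2, inf_bot_eq]
    · rw [if_neg h2, eq_bot_iff]
      intro x hx
      obtain ⟨hxA, hxB⟩ := Submodule.mem_inf.1 hx
      obtain ⟨hxg, hxk⟩ := Submodule.mem_inf.1 hxA
      obtain ⟨y, hyg, hxy⟩ := hxB
      rw [LinearMap.mulLeft_apply] at hxy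
      rw [LinearMap.mem_ker, LinearMap.mulLeft_apply, ← hxy] at hxk
      have hky : sympVec n ^ (n - (k - 2)) * y = 0 := by
        rw [show n - (k - 2) = (n - k + 1) + 1 by omega, pow_succ, mul_assoc]
        exact hxk
      have hy0 : y = 0 := hl_inj n (by omega : k - 2 ≤ n) hyg hky
      rw [Submodule.mem_bot, ← hxy, hy0, mul_zero]
  · apply le_antisymm
    · refine sup_le inf_le_left ?_
      by_cases h2 : k < 2
      · rw [if_pos h2]; exact bot_le
      · rw [if_neg h2]
        rintro x ⟨y, hy, rfl⟩
        rw [LinearMap.mulLeft_apply]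
        have := mul_mem_grade (sympVec_mem_grade n) hy
        rwa [show 2 + (k - 2) = k by omega] at this
    · intro x hx
      by_cases h2 : k < 2
      · rw [if_pos h2, sup_bot_eq]
        have hlam : Lam n x = 0 := by
          have hk01 : k = 0 ∨ k = 1 := by omega
          rcases hk01 with rfl | rfl
          · exact Lam_grade_zero n hx
          · exact Lam_grade_one n hx
        have hprim : x ∈ Prim n k :=
          Submodule.mem_inf.2 ⟨hx, LinearMap.mem_ker.2 hlam⟩
        refine Submodule.mem_inf.2 ⟨hx, LinearMap.mem_ker.2 ?_⟩
        rw [LinearMap.mulLeft_apply]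
        exact prim_ker n k hk hprim
      · rw [if_neg h2]
        obtain ⟨p, y, hp, hy, rfl⟩ := split n k hk hx
        refine Submodule.add_mem _ (Submodule.mem_sup_left ?_)
          (Submodule.mem_sup_right ?_)
        · refine Submodule.mem_inf.2 ⟨hp.1, LinearMap.mem_ker.2 ?_⟩
          rw [LinearMap.mulLeft_apply]
          exact prim_ker n k hk hp
        · exact ⟨y, hy, by rw [LinearMap.mulLeft_apply]⟩
end
end

section
/- Let n ≥ 1 and 0 ≤ k ≤ n. Then the map L^{n−k} : ⋀^k(ℝ^{2n}) → ⋀^{2n−k}(ℝ^{2n}), given by exterior multiplication by ω^{n−k}, is a linear isomorphism. -/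
noncomputable section

namespace HL

open ExteriorAlgebra CliffordAlgebra

abbrev Md (n : ℕ) : Type := Fin (2 * n) → ℝ
abbrev EA (n : ℕ) : Type := ExteriorAlgebra ℝ (Md n)

variable (n : ℕ)

def i1 (j : Fin n) : Fin (2 * n) := ⟨j.1, by have := j.2; omega⟩
def i2 (j : Fin n) : Fin (2 * n) := ⟨n + j.1, by have := j.2; omega⟩
def ev (i : Fin (2 * n)) : Md n := Pi.single i 1
def aj (j : Fin n) : EA n := ι ℝ (ev n (i1 n j))
def bj (j : Fin n) : EA n := ι ℝ (ev n (i2 n j))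
def al (j : Fin n) : Module.Dual ℝ (Md n) := LinearMap.proj (i1 n j)
def be (j : Fin n) : Module.Dual ℝ (Md n) := LinearMap.proj (i2 n j)

lemma sympVec_eq : sympVec n = ∑ j, aj n j * bj n j := rfl

/-- contraction operator -/
def ctr (d : Module.Dual ℝ (Md n)) : EA n →ₗ[ℝ] EA n :=
  contractLeft (Q := (0 : QuadraticForm ℝ (Md n))) d

/-- the dual Lefschetz operator -/
def Lam : EA n →ₗ[ℝ] EA n := - ∑ j, (ctr n (al n j)) ∘ₗ (ctr n (be n j))

lemma ctr_ι_mul (d : Module.Dual ℝ (Md n)) (v : Md n) (x : EA n) :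
    ctr n d (ι ℝ v * x) = d v • x - ι ℝ v * ctr n d x :=
  contractLeft_ι_mul (Q := (0 : QuadraticForm ℝ (Md n))) d v x

lemma ctr_alg (d : Module.Dual ℝ (Md n)) (r : ℝ) :
    ctr n d (algebraMap ℝ (EA n) r) = 0 :=
  contractLeft_algebraMap (Q := (0 : QuadraticForm ℝ (Md n))) d r

lemma ctr_one (d : Module.Dual ℝ (Md n)) : ctr n d 1 = 0 :=
  contractLeft_one (Q := (0 : QuadraticForm ℝ (Md n))) d

lemma ctr_ι (d : Module.Dual ℝ (Md n)) (v : Md n) :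
    ctr n d (ι ℝ v) = algebraMap ℝ (EA n) (d v) :=
  contractLeft_ι (0 : QuadraticForm ℝ (Md n)) d v

lemma ι_anti (x y : Md n) : ι ℝ x * ι ℝ y = -(ι ℝ y * ι ℝ x) := by
  have := ι_add_mul_swap (R := ℝ) x y
  exact eq_neg_of_add_eq_zero_left this

lemma i1_inj (j j' : Fin n) : i1 n j' = i1 n j ↔ j' = j := by
  simp only [i1, Fin.mk.injEq]
  exact Fin.val_inj

lemma i1_ne_i2 (j j' : Fin n) : i1 n j' ≠ i2 n j := by
  simp only [i1, i2, ne_eq, Fin.ext_iff]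
  have := j'.2
  omega

lemma i2_ne_i1 (j j' : Fin n) : i2 n j' ≠ i1 n j := by
  simp only [i1, i2, ne_eq, Fin.ext_iff]
  have := j.2
  omega

lemma i2_inj (j j' : Fin n) : i2 n j' = i2 n j ↔ j' = j := by
  simp only [i2, Fin.ext_iff]
  omega

lemma al_ev1 (j j' : Fin n) : al n j (ev n (i1 n j')) = if j' = j then 1 else 0 := by
  have : al n j (ev n (i1 n j')) = (Pi.single (i1 n j') (1:ℝ) : Md n) (i1 n j) := rfl
  rw [this, Pi.single_apply]
  rcases eq_or_ne j' j with rfl | h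
  · simp
  · simp [h, (i1_inj n j' j).not.mpr (Ne.symm h)]

lemma al_ev2 (j j' : Fin n) : al n j (ev n (i2 n j')) = 0 := by
  have : al n j (ev n (i2 n j')) = (Pi.single (i2 n j') (1:ℝ) : Md n) (i1 n j) := rfl
  rw [this, Pi.single_apply, if_neg (i1_ne_i2 n j' j)]

lemma be_ev1 (j j' : Fin n) : be n j (ev n (i1 n j')) = 0 := by
  have : be n j (ev n (i1 n j')) = (Pi.single (i1 n j') (1:ℝ) : Md n) (i2 n j) := rfl
  rw [this, Pi.single_apply, if_neg (i2_ne_i1 n j' j)]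

lemma be_ev2 (j j' : Fin n) : be n j (ev n (i2 n j')) = if j' = j then 1 else 0 := by
  have : be n j (ev n (i2 n j')) = (Pi.single (i2 n j') (1:ℝ) : Md n) (i2 n j) := rfl
  rw [this, Pi.single_apply]
  rcases eq_or_ne j' j with rfl | h
  · simp
  · simp [h, (i2_inj n j' j).not.mpr (Ne.symm h)]

/-- the equivalence pairing up indices -/
def pairEquiv : Fin n ⊕ Fin n ≃ Fin (2 * n) where
  toFun := Sum.elim (i1 n) (i2 n)
  invFun i :=
    if h : i.1 < n then Sum.inl ⟨i.1, h⟩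
    else Sum.inr ⟨i.1 - n, by have := i.2; omega⟩
  left_inv := by
    rintro (j | j)
    · simp only [Sum.elim_inl]
      refine (dif_pos (show (i1 n j).1 < n from j.2)).trans ?_
      exact congrArg Sum.inl (Fin.ext rfl)
    · simp only [Sum.elim_inr]
      refine (dif_neg (show ¬ (i2 n j).1 < n by simp only [i2]; omega)).trans ?_
      refine congrArg Sum.inr (Fin.ext ?_)
      show (i2 n j).1 - n = j.1
      simp only [i2]
      omega
  right_inv := by
    intro i
    by_cases h : i.1 < n
    · simp only [dif_pos h, Sum.elim_inl]
      exact Fin.ext rfl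
    · simp only [dif_neg h, Sum.elim_inr]
      apply Fin.ext
      show n + (i.1 - n) = i.1
      omega

lemma sum_pair {G : Type*} [AddCommMonoid G] (f : Fin (2 * n) → G) :
    ∑ i, f i = ∑ j, f (i1 n j) + ∑ j, f (i2 n j) := by
  rw [← Equiv.sum_comp (pairEquiv n) f, Fintype.sum_sum_type]
  rfl

/-- decomposition of a vector in the standard basis, grouped in pairs -/
lemma ι_decomp (v : Md n) :
    ι ℝ v = ∑ j, (al n j v • aj n j + be n j v • bj n j) := by
  classical
  have hv : v = ∑ i, v i • ev n i := by
    funext i'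
    rw [Finset.sum_apply]
    simp [ev, Pi.single_apply]
  conv_lhs => rw [hv]
  rw [map_sum]
  simp only [map_smul]
  rw [sum_pair n (fun i => v i • ι ℝ (ev n i)), ← Finset.sum_add_distrib]
  rfl

lemma ω_mul_ι (v : Md n) : sympVec n * ι ℝ v = ι ℝ v * sympVec n := by
  rw [sympVec_eq, Finset.sum_mul, Finset.mul_sum]
  refine Finset.sum_congr rfl fun j _ => ?_
  have h1 : bj n j * ι ℝ v = -(ι ℝ v * bj n j) := ι_anti n _ v
  have h2 : aj n j * ι ℝ v = -(ι ℝ v * aj n j) := ι_anti n _ v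
  rw [mul_assoc, h1, mul_neg, ← mul_assoc, h2, neg_mul, neg_neg, mul_assoc]

/-- auxiliary odd operator `D(v)` -/
def Dv (v : Md n) (z : EA n) : EA n :=
  ∑ j, (be n j v • ctr n (al n j) z - al n j v • ctr n (be n j) z)

lemma LamA (v : Md n) (z : EA n) :
    Lam n (ι ℝ v * z) = ι ℝ v * Lam n z - Dv n v z := by
  have key : ∀ j : Fin n, ctr n (al n j) (ctr n (be n j) (ι ℝ v * z))
      = (be n j v • ctr n (al n j) z - al n j v • ctr n (be n j) z)
        + ι ℝ v * ctr n (al n j) (ctr n (be n j) z) := by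
    intro j
    rw [ctr_ι_mul, map_sub, map_smul, ctr_ι_mul]
    abel
  simp only [Lam, Dv, LinearMap.neg_apply, LinearMap.sum_apply, LinearMap.comp_apply, key]
  rw [Finset.sum_add_distrib, mul_neg, Finset.mul_sum]
  abel

lemma ctr_al_ω (j₀ : Fin n) (z : EA n) :
    ctr n (al n j₀) (sympVec n * z) = sympVec n * ctr n (al n j₀) z + bj n j₀ * z := by
  classical
  rw [sympVec_eq, Finset.sum_mul, map_sum]
  have key : ∀ j : Fin n, ctr n (al n j₀) (aj n j * bj n j * z)
      = (if j = j₀ then bj n j * z else 0)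
        + aj n j * (bj n j * ctr n (al n j₀) z) := by
    intro j
    rw [mul_assoc]
    simp only [aj, bj]
    rw [ctr_ι_mul, ctr_ι_mul, al_ev1, al_ev2]
    rw [zero_smul, zero_sub, mul_neg, sub_neg_eq_add, ite_smul, one_smul, zero_smul]
  simp only [key]
  rw [Finset.sum_add_distrib, Finset.sum_ite_eq' Finset.univ j₀ (fun j => bj n j * z)]
  simp only [Finset.mem_univ, if_true]
  rw [Finset.sum_mul]
  simp only [mul_assoc]
  abel

lemma ctr_be_ω (j₀ : Fin n) (z : EA n) :
    ctr n (be n j₀) (sympVec n * z) = sympVec n * ctr n (be n j₀) z - aj n j₀ * z := by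
  classical
  rw [sympVec_eq, Finset.sum_mul, map_sum]
  have key : ∀ j : Fin n, ctr n (be n j₀) (aj n j * bj n j * z)
      = -(if j = j₀ then aj n j * z else 0)
        + aj n j * (bj n j * ctr n (be n j₀) z) := by
    intro j
    rw [mul_assoc]
    simp only [aj, bj]
    rw [ctr_ι_mul, ctr_ι_mul, be_ev1, be_ev2]
    rw [zero_smul, zero_sub, mul_sub, mul_smul_comm, ite_smul, one_smul, zero_smul]
    abel
  simp only [key]
  rw [Finset.sum_add_distrib]
  rw [show (∑ j, -(if j = j₀ then aj n j * z else 0))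
      = -(∑ j, if j = j₀ then aj n j * z else 0) from by rw [Finset.sum_neg_distrib]]
  rw [Finset.sum_ite_eq' Finset.univ j₀ (fun j => (aj n j * z))]
  simp only [Finset.mem_univ, if_true]
  rw [Finset.sum_mul]
  simp only [mul_assoc]
  abel

lemma DvB (v : Md n) (z : EA n) :
    Dv n v (sympVec n * z) = sympVec n * Dv n v z + ι ℝ v * z := by
  simp only [Dv, ctr_al_ω, ctr_be_ω]
  rw [Finset.mul_sum]
  conv_rhs => rw [ι_decomp n v, Finset.sum_mul, ← Finset.sum_add_distrib]
  refine Finset.sum_congr rfl fun j _ => ?_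
  rw [smul_add, smul_sub, mul_sub, mul_smul_comm, mul_smul_comm, add_mul, smul_mul_assoc,
    smul_mul_assoc]
  abel

lemma Lam_alg (r : ℝ) : Lam n (algebraMap ℝ (EA n) r) = 0 := by
  simp only [Lam, LinearMap.neg_apply, LinearMap.sum_apply, LinearMap.comp_apply, ctr_alg,
    map_zero, Finset.sum_const_zero, neg_zero]

lemma Lam_ω : Lam n (sympVec n) = (n : ℝ) • 1 := by
  have h1 : ∀ j : Fin n, ctr n (be n j) (sympVec n) = -(aj n j) := by
    intro j
    have h := ctr_be_ω n j 1
    rw [mul_one, ctr_one, mul_zero, zero_sub, mul_one] at h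
    exact h
  have h2 : ∀ j : Fin n, ctr n (al n j) (aj n j) = 1 := by
    intro j
    rw [aj, ctr_ι, al_ev1]
    simp
  simp only [Lam, LinearMap.neg_apply, LinearMap.sum_apply, LinearMap.comp_apply, h1, map_neg,
    h2]
  simp only [Finset.sum_neg_distrib, neg_neg, Finset.sum_const, Finset.card_univ,
    Fintype.card_fin]
  rw [Nat.cast_smul_eq_nsmul ℝ n (1 : EA n)]

/-- The key sl₂ commutator relation. -/
lemma comm : ∀ (k : ℕ) (x : EA n), x ∈ extGrade n k →
    Lam n (sympVec n * x) = sympVec n * Lam n x + ((n : ℝ) - k) • x := by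
  intro k x hx
  have hx' : x ∈ (LinearMap.range (ι ℝ : Md n →ₗ[ℝ] EA n)) ^ k := hx
  clear hx
  induction hx' using Submodule.pow_induction_on_left' with
  | algebraMap r =>
    rw [← Algebra.commutes, ← Algebra.smul_def, map_smul, Lam_ω, Lam_alg, mul_zero, zero_add,
      Algebra.algebraMap_eq_smul_one]
    rw [smul_smul, smul_smul]
    congr 1
    push_cast
    ring
  | add x y i hx hy ihx ihy =>
    rw [mul_add, map_add, map_add, mul_add, smul_add]
    rw [ihx, ihy]
    abel
  | mem_mul m hm i x hx ih =>
    obtain ⟨v, rfl⟩ := hm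
    have step1 : sympVec n * (ι ℝ v * x) = ι ℝ v * (sympVec n * x) := by
      rw [← mul_assoc, ω_mul_ι, mul_assoc]
    rw [step1, LamA, ih, LamA, DvB]
    rw [mul_sub, mul_add]
    have step2 : sympVec n * (ι ℝ v * Lam n x) = ι ℝ v * (sympVec n * Lam n x) := by
      rw [← mul_assoc, ω_mul_ι, mul_assoc]
    rw [step2, mul_smul_comm]
    have step3 : ((n : ℝ) - (i.succ : ℕ)) • (ι ℝ v * x)
        = ((n : ℝ) - ↑i) • (ι ℝ v * x) - ι ℝ v * x := by
      have hc : ((n : ℝ) - (i.succ : ℕ)) = ((n : ℝ) - ↑i) - 1 := by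
        push_cast
        ring
      rw [hc, sub_smul, one_smul]
    rw [step3]
    abel

/-! ### Grading facts -/

lemma ω_mem : sympVec n ∈ extGrade n 2 := by
  rw [sympVec_eq]
  refine Submodule.sum_mem _ fun j _ => ?_
  have h2 : extGrade n 2
      = (LinearMap.range (ι ℝ : Md n →ₗ[ℝ] EA n)) * LinearMap.range (ι ℝ : Md n →ₗ[ℝ] EA n) := by
    rw [extGrade, sq]
  rw [h2]
  exact Submodule.mul_mem_mul (LinearMap.mem_range_self _ _) (LinearMap.mem_range_self _ _)

lemma mul_ω_mem {k : ℕ} {x : EA n} (hx : x ∈ extGrade n k) :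
    sympVec n * x ∈ extGrade n (k + 2) := by
  have h2 : extGrade n (k + 2) = extGrade n 2 * extGrade n k := by
    rw [extGrade, extGrade, extGrade, ← pow_add, Nat.add_comm]
  rw [h2]
  exact Submodule.mul_mem_mul (ω_mem n) hx

lemma pow_ω_mem (m : ℕ) {k : ℕ} {x : EA n} (hx : x ∈ extGrade n k) :
    sympVec n ^ m * x ∈ extGrade n (k + 2 * m) := by
  induction m with
  | zero => simpa using hx
  | succ m ih =>
    have e1 : sympVec n ^ (m + 1) * x = sympVec n * (sympVec n ^ m * x) := by
      rw [pow_succ', mul_assoc]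
    have e2 : k + 2 * (m + 1) = (k + 2 * m) + 2 := by ring
    rw [e1, e2]
    exact mul_ω_mem n ih

lemma ctr_grade (d : Module.Dual ℝ (Md n)) :
    ∀ (k : ℕ) (x : EA n), x ∈ extGrade n k →
      (∀ k', k = k' + 1 → ctr n d x ∈ extGrade n k') ∧ (k = 0 → ctr n d x = 0) := by
  intro k x hx
  have hx' : x ∈ (LinearMap.range (ι ℝ : Md n →ₗ[ℝ] EA n)) ^ k := hx
  clear hx
  induction hx' using Submodule.pow_induction_on_left' with
  | algebraMap r =>
    exact ⟨fun k' hk' => absurd hk' (by omega), fun _ => ctr_alg n d r⟩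
  | add x y i hx hy ihx ihy =>
    constructor
    · intro k' hk'
      rw [map_add]
      exact add_mem (ihx.1 k' hk') (ihy.1 k' hk')
    · intro h0
      rw [map_add, ihx.2 h0, ihy.2 h0, add_zero]
  | mem_mul m hm i x hx ih =>
    obtain ⟨v, rfl⟩ := hm
    constructor
    · intro k' hk'
      have hik : i = k' := by omega
      subst hik
      rw [ctr_ι_mul]
      apply sub_mem
      · exact Submodule.smul_mem _ _ hx
      · cases i with
        | zero =>
          rw [ih.2 rfl, mul_zero]
          exact zero_mem _
        | succ i' =>
          have h1 : ctr n d x ∈ extGrade n i' := ih.1 i' rfl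
          have h2 : extGrade n (i' + 1)
              = (LinearMap.range (ι ℝ : Md n →ₗ[ℝ] EA n)) * extGrade n i' := by
            rw [extGrade, extGrade, pow_succ']
          rw [h2]
          exact Submodule.mul_mem_mul (LinearMap.mem_range_self _ _) h1
    · intro h
      exact absurd h (Nat.succ_ne_zero i)

lemma Lam_grade {k : ℕ} {x : EA n} (hx : x ∈ extGrade n (k + 2)) :
    Lam n x ∈ extGrade n k := by
  simp only [Lam, LinearMap.neg_apply, LinearMap.sum_apply, LinearMap.comp_apply]
  apply neg_mem
  refine Submodule.sum_mem _ fun j _ => ?_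
  have h1 : ctr n (be n j) x ∈ extGrade n (k + 1) :=
    (ctr_grade n _ (k + 2) x hx).1 (k + 1) rfl
  exact (ctr_grade n _ (k + 1) _ h1).1 k rfl

lemma Lam_grade0 {x : EA n} (hx : x ∈ extGrade n 0) : Lam n x = 0 := by
  simp only [Lam, LinearMap.neg_apply, LinearMap.sum_apply, LinearMap.comp_apply]
  have h1 : ∀ j : Fin n, ctr n (be n j) x = 0 := fun j => (ctr_grade n _ 0 x hx).2 rfl
  simp [h1]

lemma Lam_grade1 {x : EA n} (hx : x ∈ extGrade n 1) : Lam n x = 0 := by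
  simp only [Lam, LinearMap.neg_apply, LinearMap.sum_apply, LinearMap.comp_apply]
  have h1 : ∀ j : Fin n, ctr n (al n j) (ctr n (be n j) x) = 0 := by
    intro j
    have h2 : ctr n (be n j) x ∈ extGrade n 0 := (ctr_grade n _ 1 x hx).1 0 rfl
    exact (ctr_grade n _ 0 _ h2).2 rfl
  simp [h1]

lemma Lam_pow_mem (m : ℕ) {k : ℕ} {x : EA n} (hx : x ∈ extGrade n (k + 2 * m)) :
    (Lam n ^ m) x ∈ extGrade n k := by
  induction m generalizing x with
  | zero => simpa using hx
  | succ m ih =>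
    rw [pow_succ, Module.End.mul_apply]
    apply ih
    have e2 : k + 2 * (m + 1) = (k + 2 * m) + 2 := by ring
    rw [e2] at hx
    exact Lam_grade n hx

set_option synthInstance.maxHeartbeats 1000000 in
lemma vanish {k : ℕ} (hk : 2 * n < k) : extGrade n k = ⊥ := by
  obtain ⟨t, rfl⟩ : ∃ t, k = (2 * n + 1) + t := ⟨k - (2 * n + 1), by omega⟩
  rw [extGrade, pow_add]
  have h0 : (LinearMap.range (ι ℝ : Md n →ₗ[ℝ] EA n)) ^ (2 * n + 1) = ⊥ := by
    have hspan : Submodule.span ℝ (Set.range (ιMulti ℝ (2 * n + 1)))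
        = (LinearMap.range (ι ℝ : Md n →ₗ[ℝ] EA n)) ^ (2 * n + 1) :=
      ιMulti_span_fixedDegree ℝ (2 * n + 1)
    rw [← hspan, Submodule.span_eq_bot]
    rintro x ⟨v, rfl⟩
    apply AlternatingMap.map_linearDependent
    intro hlin
    have hcard := hlin.fintype_card_le_finrank
    simp only [Fintype.card_fin] at hcard
    have hfr : Module.finrank ℝ (Md n) = 2 * n := by
      simp [Md]
    omega
  rw [h0, Submodule.bot_mul]

instance extGrade_fd (k : ℕ) : FiniteDimensional ℝ (extGrade n k) := by
  have h1 : (LinearMap.range (ι ℝ : Md n →ₗ[ℝ] EA n)).FG := by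
    rw [← Submodule.map_top]
    exact Submodule.FG.map _ (Module.finite_def.mp inferInstance)
  have h2 : (extGrade n k).FG := by
    rw [extGrade]
    exact h1.pow k
  exact Module.Finite.iff_fg.mpr h2

/-! ### Abstract sl₂ injectivity -/

lemma sl2_inj {W : Type*} [AddCommGroup W] [Module ℝ W]
    (U : ℤ → Submodule ℝ W) (N : ℕ) (hbot : ∀ j : ℤ, j < 0 → U j = ⊥)
    (L Λ' : W →ₗ[ℝ] W)
    (hL : ∀ (j : ℤ) (x : W), x ∈ U j → L x ∈ U (j + 2))
    (hΛ : ∀ (j : ℤ) (x : W), x ∈ U j → Λ' x ∈ U (j - 2))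
    (hcomm : ∀ (j : ℤ) (x : W), x ∈ U j →
      Λ' (L x) = L (Λ' x) + (((N : ℤ) - j : ℤ) : ℝ) • x) :
    ∀ k : ℕ, (k : ℤ) ≤ N → ∀ x ∈ U (k : ℤ), (L ^ (N - k)) x = 0 → x = 0 := by
  have hLpow : ∀ (m : ℕ) (j : ℤ) (x : W), x ∈ U j → (L ^ m) x ∈ U (j + 2 * m) := by
    intro m
    induction m with
    | zero => intro j x hx; simpa using hx
    | succ m ih =>
      intro j x hx
      rw [pow_succ, Module.End.mul_apply]
      have h := ih (j + 2) (L x) (hL j x hx)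
      have e : j + 2 + 2 * (m : ℤ) = j + 2 * ((m : ℕ) + 1 : ℕ) := by push_cast; ring
      rw [e] at h
      exact h
  have commpow : ∀ (m : ℕ) (j : ℤ) (x : W), x ∈ U j →
      Λ' ((L ^ (m + 1)) x) = (L ^ (m + 1)) (Λ' x)
        + ((((m : ℤ) + 1) * ((N : ℤ) - j - (m + 1) + 1) : ℤ) : ℝ) • (L ^ m) x := by
    intro m
    induction m with
    | zero =>
      intro j x hx
      simp only [zero_add, pow_one, pow_zero, Module.End.one_apply]
      rw [hcomm j x hx]
      norm_num
    | succ m ih =>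
      intro j x hx
      rw [show m + 1 + 1 = (m + 1) + 1 from rfl, pow_succ' L (m + 1), Module.End.mul_apply]
      rw [hcomm (j + 2 * (m + 1)) ((L ^ (m + 1)) x) (hLpow (m + 1) j x hx)]
      rw [ih j x hx, map_add, map_smul]
      rw [← Module.End.mul_apply L (L ^ (m + 1)), ← pow_succ']
      rw [← Module.End.mul_apply L (L ^ m), ← pow_succ']
      rw [add_assoc, ← add_smul]
      congr 1
      push_cast
      ring
  intro k
  induction k using Nat.strong_induction_on with
  | _ k IH =>
    intro hkN x hx hLx
    rcases Nat.lt_or_ge k N with hklt | hkge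
    case _ =>
      -- k < N
      obtain ⟨m', hm'⟩ : ∃ m', N - k = m' + 1 := ⟨N - k - 1, by omega⟩
      rw [hm'] at hLx
      have hmZ : ((m' : ℤ) + 1) = (N : ℤ) - k := by omega
      have hw : Λ' x ∈ U ((k : ℤ) - 2) := hΛ _ x hx
      have hw0 : Λ' x = 0 := by
        rcases lt_or_ge (k : ℤ) 2 with h2 | h2
        · rw [hbot _ (by omega)] at hw
          simpa using hw
        · obtain ⟨k', rfl⟩ : ∃ k', k = k' + 2 := ⟨k - 2, by omega⟩
          have hw' : Λ' x ∈ U ((k' : ℕ) : ℤ) := by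
            have e : ((k' + 2 : ℕ) : ℤ) - 2 = ((k' : ℕ) : ℤ) := by push_cast; ring
            rw [← e]
            exact hw
          have hc := commpow m' ((k' + 2 : ℕ) : ℤ) x hx
          rw [hLx, map_zero] at hc
          have hco : ((((m' : ℤ) + 1) * ((N : ℤ) - ((k' + 2 : ℕ) : ℤ) - ((m' : ℤ) + 1) + 1)) : ℤ)
              = ((m' : ℤ) + 1) := by
            have : (N : ℤ) - ((k' + 2 : ℕ) : ℤ) - ((m' : ℤ) + 1) + 1 = 1 := by
              push_cast at hmZ ⊢
              omega
            rw [this, mul_one]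
          rw [hco] at hc
          have h3 := add_eq_zero_iff_eq_neg.mp hc.symm
          have h4 : (L ^ (N - k')) (Λ' x) = 0 := by
            have hNk' : N - k' = (m' + 1) + 2 := by omega
            rw [hNk']
            have e1 : L ^ ((m' + 1) + 2) = L ∘ₗ (L ∘ₗ L ^ (m' + 1)) := by
              rw [pow_succ' L ((m' + 1) + 1), pow_succ' L (m' + 1)]
              rfl
            rw [e1]
            simp only [LinearMap.comp_apply]
            rw [h3, map_neg, map_neg, map_smul, map_smul]
            have e2 : L ((L ^ m') x) = (L ^ (m' + 1)) x := by
              rw [← Module.End.mul_apply L (L ^ m'), ← pow_succ']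
            rw [e2, hLx, map_zero, smul_zero, neg_zero]
          have hk'le : (k' : ℤ) ≤ (N : ℤ) := by
            have : k' ≤ N := by omega
            exact_mod_cast this
          exact IH k' (by omega) hk'le (Λ' x) hw' h4
      -- descent
      have desc : ∀ (j : ℕ), j ≤ m' + 1 → (L ^ j) x = 0 → x = 0 := by
        intro j
        induction j with
        | zero => intro _ h; simpa using h
        | succ j ihj =>
          intro hjm hLj
          apply ihj (by omega)
          have hc := commpow j (k : ℤ) x hx
          rw [hLj, hw0, map_zero, map_zero, zero_add] at hc
          set c : ℤ := ((j : ℤ) + 1) * ((N : ℤ) - k - (j + 1) + 1) with hcdef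
          have hcpos : 0 < c := by
            have h1 : ((j : ℤ) + 1) ≤ (N : ℤ) - k := by omega
            have h2 : 0 < (N : ℤ) - k - (j + 1) + 1 := by omega
            positivity
          have h5 : ((c : ℤ) : ℝ) ≠ 0 := by
            exact_mod_cast hcpos.ne'
          have h7 : ((c : ℤ) : ℝ) • (L ^ j) x = 0 := hc.symm
          have h8 := congrArg (fun y => (((c : ℤ) : ℝ))⁻¹ • y) h7
          simp only [smul_smul, inv_mul_cancel₀ h5, one_smul, smul_zero] at h8
          exact h8
      exact desc (m' + 1) le_rfl hLx
    case _ =>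
      -- k = N
      have hkN' : k = N := by omega
      subst hkN'
      simpa [Nat.sub_self] using hLx

/-! ### Instantiations -/

def Ugrade (j : ℤ) : Submodule ℝ (EA n) := if 0 ≤ j then extGrade n j.toNat else ⊥

lemma Ugrade_coe (k : ℕ) : Ugrade n (k : ℤ) = extGrade n k := by
  rw [Ugrade, if_pos (by positivity)]
  simp

lemma Ugrade_bot {j : ℤ} (hj : j < 0) : Ugrade n j = ⊥ := if_neg (by omega)

lemma UL : ∀ (j : ℤ) (x : EA n), x ∈ Ugrade n j →
    (LinearMap.mulLeft ℝ (sympVec n)) x ∈ Ugrade n (j + 2) := by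
  intro j x hx
  by_cases hj : 0 ≤ j
  · rw [Ugrade, if_pos hj] at hx
    rw [Ugrade, if_pos (by omega), LinearMap.mulLeft_apply]
    have h := mul_ω_mem n hx
    have e : (j + 2).toNat = j.toNat + 2 := by omega
    rw [e]
    exact h
  · rw [Ugrade, if_neg hj] at hx
    rw [Submodule.mem_bot] at hx
    subst hx
    rw [map_zero]
    exact zero_mem _

lemma ULam : ∀ (j : ℤ) (x : EA n), x ∈ Ugrade n j → Lam n x ∈ Ugrade n (j - 2) := by
  intro j x hx
  by_cases hj : 0 ≤ j
  · rw [Ugrade, if_pos hj] at hx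
    by_cases hj2 : 2 ≤ j
    · rw [Ugrade, if_pos (by omega)]
      have e : j.toNat = (j - 2).toNat + 2 := by omega
      rw [e] at hx
      exact Lam_grade n hx
    · have h01 : j = 0 ∨ j = 1 := by omega
      have hz : Lam n x = 0 := by
        rcases h01 with rfl | rfl
        · exact Lam_grade0 n hx
        · exact Lam_grade1 n hx
      rw [hz]
      exact zero_mem _
  · rw [Ugrade, if_neg hj] at hx
    rw [Submodule.mem_bot] at hx
    subst hx
    rw [map_zero]
    exact zero_mem _

lemma Ucomm : ∀ (j : ℤ) (x : EA n), x ∈ Ugrade n j →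
    Lam n (sympVec n * x) = sympVec n * Lam n x + (((n : ℤ) - j : ℤ) : ℝ) • x := by
  intro j x hx
  by_cases hj : 0 ≤ j
  · rw [Ugrade, if_pos hj] at hx
    have h := comm n j.toNat x hx
    rw [h]
    congr 1
    push_cast
    rw [show ((j.toNat : ℕ) : ℝ) = ((j : ℤ) : ℝ) from by
      rw [← Int.cast_natCast, Int.toNat_of_nonneg hj]]
  · rw [Ugrade, if_neg hj] at hx
    rw [Submodule.mem_bot] at hx
    subst hx
    simp

lemma inj1 (k : ℕ) (hk : k ≤ n) :
    ∀ x ∈ extGrade n k, sympVec n ^ (n - k) * x = 0 → x = 0 := by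
  intro x hx hx0
  have hcomm : ∀ (j : ℤ) (x : EA n), x ∈ Ugrade n j →
      Lam n ((LinearMap.mulLeft ℝ (sympVec n)) x)
        = (LinearMap.mulLeft ℝ (sympVec n)) (Lam n x) + (((n : ℤ) - j : ℤ) : ℝ) • x := by
    intro j x hx
    simpa only [LinearMap.mulLeft_apply] using Ucomm n j x hx
  refine sl2_inj (Ugrade n) n (fun j hj => Ugrade_bot n hj)
    (LinearMap.mulLeft ℝ (sympVec n)) (Lam n) (UL n) (ULam n) hcomm k
    (by exact_mod_cast hk) x (by rw [Ugrade_coe]; exact hx) ?_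
  rw [LinearMap.pow_mulLeft, LinearMap.mulLeft_apply]
  exact hx0

lemma inj2 (k : ℕ) (hk : k ≤ n) :
    ∀ x ∈ extGrade n (2 * n - k), (Lam n ^ (n - k)) x = 0 → x = 0 := by
  intro x hx hx0
  have hbot : ∀ j : ℤ, j < 0 → Ugrade n (2 * (n : ℤ) - j) = ⊥ := by
    intro j hj
    rw [Ugrade, if_pos (by omega)]
    apply vanish
    omega
  have hL : ∀ (j : ℤ) (x : EA n), x ∈ Ugrade n (2 * (n : ℤ) - j) →
      Lam n x ∈ Ugrade n (2 * (n : ℤ) - (j + 2)) := by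
    intro j x hx
    have h := ULam n (2 * (n : ℤ) - j) x hx
    have e : 2 * (n : ℤ) - j - 2 = 2 * (n : ℤ) - (j + 2) := by ring
    rw [e] at h
    exact h
  have hΛ : ∀ (j : ℤ) (x : EA n), x ∈ Ugrade n (2 * (n : ℤ) - j) →
      (LinearMap.mulLeft ℝ (sympVec n)) x ∈ Ugrade n (2 * (n : ℤ) - (j - 2)) := by
    intro j x hx
    have h := UL n (2 * (n : ℤ) - j) x hx
    have e : 2 * (n : ℤ) - j + 2 = 2 * (n : ℤ) - (j - 2) := by ring
    rw [e] at h
    exact h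
  have hcomm : ∀ (j : ℤ) (x : EA n), x ∈ Ugrade n (2 * (n : ℤ) - j) →
      (LinearMap.mulLeft ℝ (sympVec n)) (Lam n x)
        = Lam n ((LinearMap.mulLeft ℝ (sympVec n)) x) + (((n : ℤ) - j : ℤ) : ℝ) • x := by
    intro j x hx
    have h := Ucomm n (2 * (n : ℤ) - j) x hx
    simp only [LinearMap.mulLeft_apply]
    have e : (((n : ℤ) - (2 * (n : ℤ) - j) : ℤ) : ℝ) = -((((n : ℤ) - j : ℤ)) : ℝ) := by
      push_cast
      ring
    rw [h, e, neg_smul]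
    abel
  have hmem : x ∈ Ugrade n (2 * (n : ℤ) - (k : ℤ)) := by
    have e : 2 * (n : ℤ) - (k : ℤ) = ((2 * n - k : ℕ) : ℤ) := by
      push_cast [Nat.cast_sub (by omega : k ≤ 2 * n)]
      ring
    rw [e, Ugrade_coe]
    exact hx
  exact sl2_inj (fun j => Ugrade n (2 * (n : ℤ) - j)) n hbot (Lam n)
    (LinearMap.mulLeft ℝ (sympVec n)) hL hΛ hcomm k (by exact_mod_cast hk) x hmem hx0

end HL

/-- For `0 ≤ k ≤ n`, the map `L^{n−k} : ⋀^k(ℝ^{2n}) → ⋀^{2n−k}(ℝ^{2n})`, exterior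
multiplication by `ω^{n−k}`, is a linear isomorphism: it maps `⋀^k` into `⋀^{2n−k}`,
is injective on `⋀^k`, and is onto `⋀^{2n−k}`. -/
theorem stmt9 (n k : ℕ) (hn : 1 ≤ n) (hk : k ≤ n) :
    (∀ ξ ∈ extGrade n k, sympVec n ^ (n - k) * ξ ∈ extGrade n (2 * n - k)) ∧
    (∀ ξ ∈ extGrade n k, sympVec n ^ (n - k) * ξ = 0 → ξ = 0) ∧
    (∀ ζ ∈ extGrade n (2 * n - k), ∃ ξ ∈ extGrade n k, sympVec n ^ (n - k) * ξ = ζ) := by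
  have hmap : ∀ ξ ∈ extGrade n k, sympVec n ^ (n - k) * ξ ∈ extGrade n (2 * n - k) := by
    intro ξ hξ
    have h := HL.pow_ω_mem n (n - k) hξ
    have e : k + 2 * (n - k) = 2 * n - k := by omega
    rw [e] at h
    exact h
  refine ⟨hmap, HL.inj1 n k hk, ?_⟩
  have hmap' : ∀ ξ ∈ extGrade n k,
      (LinearMap.mulLeft ℝ (sympVec n ^ (n - k))) ξ ∈ extGrade n (2 * n - k) := by
    simpa only [LinearMap.mulLeft_apply] using hmap
  have hmapG : ∀ ζ ∈ extGrade n (2 * n - k), (HL.Lam n ^ (n - k)) ζ ∈ extGrade n k := by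
    intro ζ hζ
    have e : 2 * n - k = k + 2 * (n - k) := by omega
    rw [e] at hζ
    exact HL.Lam_pow_mem n (n - k) hζ
  set F : extGrade n k →ₗ[ℝ] extGrade n (2 * n - k) :=
    (LinearMap.mulLeft ℝ (sympVec n ^ (n - k))).restrict hmap' with hF
  set G : extGrade n (2 * n - k) →ₗ[ℝ] extGrade n k :=
    (HL.Lam n ^ (n - k)).restrict hmapG with hG
  have hFinj : Function.Injective F := by
    rw [← LinearMap.ker_eq_bot, eq_bot_iff]
    rintro ⟨z, hz⟩ hzk
    have h1 : sympVec n ^ (n - k) * z = 0 := by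
      have := congrArg Subtype.val (LinearMap.mem_ker.mp hzk)
      simpa [hF, LinearMap.restrict_apply] using this
    have h2 := HL.inj1 n k hk z hz h1
    simpa using h2
  have hGinj : Function.Injective G := by
    rw [← LinearMap.ker_eq_bot, eq_bot_iff]
    rintro ⟨z, hz⟩ hzk
    have h1 : (HL.Lam n ^ (n - k)) z = 0 := by
      have := congrArg Subtype.val (LinearMap.mem_ker.mp hzk)
      simpa [hG, LinearMap.restrict_apply] using this
    have h2 := HL.inj2 n k hk z hz h1
    simpa using h2
  have e1 := LinearMap.finrank_le_finrank_of_injective hFinj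
  have e2 := LinearMap.finrank_le_finrank_of_injective hGinj
  have heq : Module.finrank ℝ (extGrade n k) = Module.finrank ℝ (extGrade n (2 * n - k)) :=
    le_antisymm e1 e2
  have hrange : LinearMap.range F = ⊤ := by
    apply Submodule.eq_top_of_finrank_eq
    rw [LinearMap.finrank_range_of_inj hFinj]
    exact heq
  have hsurj : Function.Surjective F := LinearMap.range_eq_top.mp hrange
  intro ζ hζ
  obtain ⟨ξ, hξ⟩ := hsurj ⟨ζ, hζ⟩
  refine ⟨ξ.1, ξ.2, ?_⟩
  have := congrArg Subtype.val hξ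
  simpa [hF, LinearMap.restrict_apply] using this
end
end

section
/- Let A ⊆ [0,1] be a closed set with 0 ∈ A. Suppose there exist sequences (a_j), (b_j) with a_j, b_j ∈ A, 0 < a_j < b_j, (a_j, b_j) ∩ A = ∅ for every j, with b_j → 0 and sup_j (b_j − a_j)^{3/2} / b_j² = ∞. Then the function x ↦ x^{−2} ∫₀^x √(dist(y,A)) dy is unbounded as x → 0⁺, i.e. limsup_{x→0⁺} x^{−2} ∫₀^x √(dist(y,A)) dy = ∞. (Consequently, the curve f(x) = (x, 0, ∫₀^x √(dist(y,A)) dy) in ℍ¹ is not Pansu-differentiable at 0.) -/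
open MeasureTheory Filter

/-- Let `A ⊆ [0,1]` be closed with `0 ∈ A`, and suppose there are points `a_j < b_j` of `A`
with `(a_j, b_j) ∩ A = ∅`, `b_j → 0`, and `sup_j (b_j − a_j)^{3/2}/b_j² = ∞`.  Then
`x⁻² ∫₀ˣ √(dist(y,A)) dy` is unbounded as `x → 0⁺`
(i.e. its limsup along `𝓝[>] 0` is `∞`); hence the corresponding curve in `ℍ¹` is not
Pansu-differentiable at `0`. -/
theorem stmt14 (A : Set ℝ) (hA : IsClosed A) (hA1 : A ⊆ Set.Icc 0 1) (h0 : (0 : ℝ) ∈ A)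
    (a b : ℕ → ℝ)
    (haA : ∀ j, a j ∈ A) (hbA : ∀ j, b j ∈ A)
    (hapos : ∀ j, 0 < a j) (hab : ∀ j, a j < b j)
    (hgap : ∀ j, Set.Ioo (a j) (b j) ∩ A = ∅)
    (hb0 : Tendsto b atTop (nhds 0))
    (hsup : ∀ M : ℝ, ∃ j, M < (b j - a j) ^ ((3 : ℝ) / 2) / (b j) ^ 2) :
    ∀ M : ℝ, ∃ᶠ x in nhdsWithin (0 : ℝ) (Set.Ioi 0),
      M < (∫ y in (0:ℝ)..x, Real.sqrt (Metric.infDist y A)) / x ^ 2 := by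
  intro M
  rw [(nhdsGT_basis (0:ℝ)).frequently_iff]
  intro ε hε
  obtain ⟨j, hj⟩ := hsup (max (4*M) (1 / Real.sqrt ε))
  have haj : 0 < a j := hapos j
  have habj : a j < b j := hab j
  have hbj : 0 < b j := haj.trans habj
  set d := b j - a j with hd
  have hdpos : 0 < d := sub_pos.mpr habj
  have hdb : d ≤ b j := by simp only [hd]; linarith
  clear_value d
  have hrpow : d ^ ((3:ℝ)/2) = d * Real.sqrt d := by
    rw [show (3:ℝ)/2 = 1 + 1/2 by norm_num, Real.rpow_add hdpos, Real.rpow_one,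
      Real.sqrt_eq_rpow]
  rw [hrpow] at hj
  have hb2 : (0:ℝ) < (b j)^2 := by positivity
  have hsbj : Real.sqrt (b j) * Real.sqrt (b j) = b j := Real.mul_self_sqrt hbj.le
  have hsbjpos : 0 < Real.sqrt (b j) := Real.sqrt_pos.mpr hbj
  -- b j < ε
  have hbeps : b j < ε := by
    have h1 : d * Real.sqrt d ≤ b j * Real.sqrt (b j) :=
      mul_le_mul hdb (Real.sqrt_le_sqrt hdb) (Real.sqrt_nonneg _) hbj.le
    have h2 : b j * Real.sqrt (b j) / (b j)^2 = 1 / Real.sqrt (b j) := by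
      rw [sq]
      field_simp
      nlinarith [hsbj]
    have h3 : 1 / Real.sqrt ε < 1 / Real.sqrt (b j) := by
      calc 1 / Real.sqrt ε < d * Real.sqrt d / (b j)^2 := (le_max_right _ _).trans_lt hj
        _ ≤ b j * Real.sqrt (b j) / (b j)^2 := by gcongr
        _ = 1 / Real.sqrt (b j) := h2
    have h4 : Real.sqrt (b j) < Real.sqrt ε :=
      lt_of_one_div_lt_one_div (Real.sqrt_pos.mpr hε) h3
    nlinarith [Real.mul_self_sqrt hε.le, Real.sqrt_nonneg ε]
  refine ⟨b j, ⟨hbj, hbeps⟩, ?_⟩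
  -- integral lower bound
  set l := a j + d/4 with hl
  set r := a j + 3*d/4 with hr
  have hlr : l ≤ r := by simp only [hl, hr]; linarith
  clear_value l r
  have hcont : Continuous fun y => Real.sqrt (Metric.infDist y A) :=
    Real.continuous_sqrt.comp (Metric.continuous_infDist_pt A)
  have hlow : ∀ y ∈ Set.Icc l r, Real.sqrt (d/4) ≤ Real.sqrt (Metric.infDist y A) := by
    intro y hy
    apply Real.sqrt_le_sqrt
    by_contra hc
    push_neg at hc
    obtain ⟨z, hz, hdz⟩ := (Metric.infDist_lt_iff ⟨0, h0⟩).mp hc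
    refine absurd hdz (not_lt.mpr ?_)
    have hznot : z ∉ Set.Ioo (a j) (b j) := by
      intro hmem
      have : z ∈ Set.Ioo (a j) (b j) ∩ A := ⟨hmem, hz⟩
      rw [hgap j] at this
      exact this
    rw [Real.dist_eq]
    rcases lt_or_ge (a j) z with hza | hza
    · have hbz : b j ≤ z := by
        by_contra hc
        exact hznot ⟨hza, lt_of_not_ge hc⟩
      have : z - y ≥ d/4 := by
        have := hy.2
        simp only [hr] at this
        linarith
      calc d/4 ≤ z - y := this
        _ ≤ |y - z| := by rw [abs_sub_comm]; exact le_abs_self _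
    · have : y - z ≥ d/4 := by
        have := hy.1
        simp only [hl] at this
        linarith
      calc d/4 ≤ y - z := this
        _ ≤ |y - z| := le_abs_self _
  have hstep1 : (r - l) * Real.sqrt (d/4) ≤ ∫ y in l..r, Real.sqrt (Metric.infDist y A) := by
    have := intervalIntegral.integral_mono_on (μ := MeasureTheory.volume) hlr intervalIntegrable_const
      (hcont.intervalIntegrable l r) hlow
    simpa [smul_eq_mul, mul_div_assoc] using this
  have hconst : (r - l) * Real.sqrt (d/4) = d * Real.sqrt d / 4 := by
    have h4 : Real.sqrt (d/4) = Real.sqrt d / 2 := by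
      rw [Real.sqrt_div hdpos.le, show (4:ℝ) = 2^2 by norm_num,
        Real.sqrt_sq (by norm_num : (0:ℝ) ≤ 2)]
    rw [h4]
    simp only [hl, hr]
    ring
  have hstep2 : (∫ y in l..r, Real.sqrt (Metric.infDist y A)) ≤
      ∫ y in (0:ℝ)..(b j), Real.sqrt (Metric.infDist y A) := by
    apply intervalIntegral.integral_mono_interval (by simp only [hl]; linarith) hlr
      (by simp only [hr]; linarith)
      (Filter.Eventually.of_forall fun x => Real.sqrt_nonneg _)
      (hcont.intervalIntegrable 0 (b j))
  have hI : d * Real.sqrt d / 4 ≤ ∫ y in (0:ℝ)..(b j), Real.sqrt (Metric.infDist y A) := by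
    rw [← hconst]; exact hstep1.trans hstep2
  rw [lt_div_iff₀ hb2]
  have hj4 : 4*M < d * Real.sqrt d / (b j)^2 := (le_max_left _ _).trans_lt hj
  rw [lt_div_iff₀ hb2] at hj4
  calc M * b j ^ 2 < d * Real.sqrt d / 4 := by linarith
    _ ≤ _ := hI
end
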